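/- arXiv:2006.09572 — 8 statements merged into one kernel-verified Lean document; each statement's English description precedes it below -/
import Mathlib

section
/- Let A be a nontrivial linearly ordered abelian group and let G be any linearly ordered abelian group. Then there exist an index type ι, an ultrafilter 𝒰 on ι, and an additive group homomorphism f from G into the ultrapower Filter.Germ (𝒰 : Filter ι) A that is injective and strictly monotone (i.e. an embedding of ordered groups). In other words, every totally ordered abelian ℓ-group lies in ISP_U(A) for every nontrivial totally ordered abelian ℓ-group A. -/
/-!
For a finite subset `S` of `G`, the differences `y - x` with `x < y` in `S` are finitely many
positive vectors of the divisible hull of `G`, a linearly ordered `ℚ`-vector space. The cone they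
generate consists of nonnegative vectors, so it misses each `-(y - x)`, and Farkas' lemma yields a
linear functional that is positive on all of them. Clearing denominators on `S` turns it into an
integer valued map that is strictly monotone on `S` and additive on the sums that stay in `S`.
Scaling by a positive element of `A` and gluing these maps along an ultrafilter on the finite
subsets of `G` that refines `atTop` gives the embedding.
-/

open Set Filter

namespace PointedCone

variable {𝕜 M N : Type*} [Field 𝕜] [LinearOrder 𝕜] [IsStrictOrderedRing 𝕜]
  [AddCommGroup M] [Module 𝕜 M] [AddCommGroup N] [Module 𝕜 N]

theorem nonneg_of_mem_hull {ψ : M →ₗ[𝕜] 𝕜} {s : Set M} (hψ : ∀ v ∈ s, 0 ≤ ψ v) {x : M}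
    (hx : x ∈ hull 𝕜 s) : 0 ≤ ψ x :=
  (Submodule.span_le (p := (positive 𝕜 𝕜).comap ψ)).2 hψ hx

theorem hull_image_le (f : M →ₗ[𝕜] N) (s : Set M) : hull 𝕜 (f '' s) ≤ (hull 𝕜 s).map f :=
  Submodule.span_le.2 <| image_mono subset_hull

/-- Farkas' lemma. -/
theorem exists_dual_neg_of_notMem_hull {s : Set M} (hs : s.Finite) {u : M}
    (hu : u ∉ hull 𝕜 s) : ∃ ψ : M →ₗ[𝕜] 𝕜, (∀ v ∈ s, 0 ≤ ψ v) ∧ ψ u < 0 := by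
  obtain ⟨n, v, -, rfl⟩ := hs.fin_param
  clear hs
  induction n generalizing u with
  | zero =>
    have hu₀ : u ≠ 0 := fun h => hu (h ▸ zero_mem _)
    obtain ⟨φ, hφ⟩ := Module.Projective.exists_dual_eq_one 𝕜 hu₀
    exact ⟨-φ, by simp, by simp [hφ]⟩
  | succ n ih =>
    rw [Fin.range_fin_succ] at hu ⊢
    set v₀ := v 0
    set w := Fin.tail v
    have hw : hull 𝕜 (range w) ≤ hull 𝕜 (insert v₀ (range w)) :=
      Submodule.span_mono (subset_insert _ _)
    obtain ⟨ψ, hψw, hψu⟩ := ih w (fun h => hu (hw h))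
    rcases le_or_gt 0 (ψ v₀) with hψv₀ | hψv₀
    · exact ⟨ψ, forall_mem_insert.2 ⟨hψv₀, hψw⟩, hψu⟩
    -- Otherwise project along `v₀` onto `ker ψ` and recurse on the projected family.
    let pr : M →ₗ[𝕜] M := LinearMap.id - (ψ v₀)⁻¹ • ψ.smulRight v₀
    have hpr (x : M) : pr x = x - (ψ x / ψ v₀) • v₀ := by
      simp [pr, smul_smul, div_eq_inv_mul]
    have hpr_u : pr u ∉ hull 𝕜 (range (pr ∘ w)) := by
      rw [range_comp]
      intro h
      obtain ⟨z, hz, hzu⟩ := mem_map.1 (hull_image_le pr _ h)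
      rw [hpr, hpr] at hzu
      have hψz := nonneg_of_mem_hull hψw hz
      have hu_eq : u = ((ψ u - ψ z) / ψ v₀) • v₀ + z := by
        rw [sub_div, sub_smul]
        linear_combination (norm := module) -hzu
      refine hu (hu_eq ▸ add_mem (smul_mem _ ?_ (subset_hull (mem_insert _ _))) (hw hz))
      exact div_nonneg_of_nonpos (by linarith) hψv₀.le
    obtain ⟨χ, hχ, hχu⟩ := ih (pr ∘ w) hpr_u
    refine ⟨χ ∘ₗ pr, forall_mem_insert.2 ⟨?_, ?_⟩, hχu⟩
    · simp [hpr, hψv₀.ne]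
    · rintro _ ⟨i, rfl⟩
      exact hχ _ (mem_range_self i)

end PointedCone

/-- Gordan's theorem for ordered vector spaces. -/
theorem exists_linearMap_forall_pos {𝕜 V : Type*} [Field 𝕜] [LinearOrder 𝕜]
    [IsStrictOrderedRing 𝕜] [AddCommGroup V] [PartialOrder V] [IsOrderedAddMonoid V]
    [Module 𝕜 V] [PosSMulMono 𝕜 V] {s : Set V} (hs : s.Finite) (hpos : ∀ p ∈ s, 0 < p) :
    ∃ ψ : V →ₗ[𝕜] 𝕜, ∀ p ∈ s, 0 < ψ p := by
  have hs_nonneg : PointedCone.hull 𝕜 s ≤ PointedCone.positive 𝕜 V :=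
    Submodule.span_le.2 fun v hv => (hpos v hv).le
  have hsep (p : V) (hp : p ∈ s) : ∃ ψ : V →ₗ[𝕜] 𝕜, (∀ v ∈ s, 0 ≤ ψ v) ∧ ψ (-p) < 0 :=
    PointedCone.exists_dual_neg_of_notMem_hull hs fun h =>
      (neg_neg_of_pos (hpos p hp)).not_ge (hs_nonneg h)
  choose! ψ hψ_nonneg hψ_neg using hsep
  refine ⟨∑ p ∈ hs.toFinset, ψ p, fun q hq => ?_⟩
  rw [LinearMap.sum_apply]
  refine Finset.sum_pos' (fun p hp => hψ_nonneg p (hs.mem_toFinset.1 hp) q hq)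
    ⟨q, hs.mem_toFinset.2 hq, ?_⟩
  simpa using hψ_neg q hq

theorem exists_pos_nat_mul_eq_intCast {s : Set ℚ} (hs : s.Finite) :
    ∃ D : ℕ, 0 < D ∧ ∀ q ∈ s, ∃ n : ℤ, D * q = n := by
  refine ⟨∏ q ∈ hs.toFinset, q.den, Finset.prod_pos fun q _ => q.den_pos, fun q hq =>
    ⟨(∏ r ∈ hs.toFinset.erase q, r.den) * q.num, ?_⟩⟩
  rw [← Finset.prod_erase_mul _ _ (hs.mem_toFinset.2 hq)]
  push_cast
  rw [mul_assoc, mul_comm (q.den : ℚ), Rat.mul_den_eq_num]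

section LinearOrderedAddCommGroup

variable {G : Type*} [AddCommGroup G] [LinearOrder G] [IsOrderedAddMonoid G]

theorem exists_addMonoidHom_rat_strictMonoOn {S : Set G} (hS : S.Finite) :
    ∃ f : G →+ ℚ, StrictMonoOn f S := by
  let ι : G →+ DivisibleHull G := DivisibleHull.coeAddMonoidHom G
  have hι : StrictMono ι :=
    (DivisibleHull.coeOrderAddMonoidHom G).monotone'.strictMono_of_injective
      DivisibleHull.coe_injective
  let P : Set (DivisibleHull G) := (fun p : G × G => ι (p.2 - p.1)) '' (S ×ˢ S) ∩ {v | 0 < v}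
  obtain ⟨ψ, hψ⟩ := exists_linearMap_forall_pos (𝕜 := ℚ) (s := P)
    (((hS.prod hS).image _).inter_of_left _) fun p hp => hp.2
  refine ⟨ψ.toAddMonoidHom.comp ι, fun x hx y hy hxy => ?_⟩
  have hpos : 0 < ι (y - x) := map_zero ι ▸ hι (sub_pos.2 hxy)
  simpa [sub_pos] using hψ _ ⟨⟨(x, y), ⟨hx, hy⟩, rfl⟩, hpos⟩

theorem exists_int_strictMonoOn_map_add {S : Set G} (hS : S.Finite) :
    ∃ φ : G → ℤ, StrictMonoOn φ S ∧ ∀ x ∈ S, ∀ y ∈ S, x + y ∈ S → φ (x + y) = φ x + φ y := by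
  obtain ⟨f, hf⟩ := exists_addMonoidHom_rat_strictMonoOn hS
  obtain ⟨D, hD, hDf⟩ := exists_pos_nat_mul_eq_intCast (hS.image f)
  have hφ (x : G) (hx : x ∈ S) : ((⌊D * f x⌋ : ℤ) : ℚ) = D * f x := by
    obtain ⟨n, hn⟩ := hDf _ (mem_image_of_mem f hx)
    rw [hn, Int.floor_intCast]
  refine ⟨fun g => ⌊D * f g⌋, fun x hx y hy hxy => ?_, fun x hx y hy hxy => ?_⟩
  · have hDlt : (D : ℚ) * f x < D * f y := mul_lt_mul_of_pos_left (hf hx hy hxy) (by positivity)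
    rw [← hφ x hx, ← hφ y hy] at hDlt
    exact_mod_cast hDlt
  · have hDadd : ((⌊D * f (x + y)⌋ : ℤ) : ℚ) = ⌊D * f x⌋ + ⌊D * f y⌋ := by
      rw [hφ _ hxy, hφ x hx, hφ y hy, map_add, mul_add]
    exact_mod_cast hDadd

end LinearOrderedAddCommGroup

theorem Filter.Germ.exists_addMonoidHom_strictMono {ι G A : Type*} [AddZeroClass G] [Preorder G]
    [AddGroup A] [Preorder A] (𝒰 : Ultrafilter ι) (F : ι → G → A)
    (hadd : ∀ x y, ∀ᶠ i in 𝒰, F i (x + y) = F i x + F i y)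
    (hlt : ∀ x y, x < y → ∀ᶠ i in 𝒰, F i x < F i y) :
    ∃ f : G →+ (𝒰 : Filter ι).Germ A, StrictMono f :=
  ⟨AddMonoidHom.mk' (fun g => ((fun i => F i g : ι → A) : (𝒰 : Filter ι).Germ A))
    fun x y => Germ.coe_eq.2 (hadd x y), fun x y hxy => Germ.coe_lt.2 (hlt x y hxy)⟩

/-- Every totally ordered abelian ℓ-group `G` embeds (as an ordered group) into an
ultrapower of any nontrivial totally ordered abelian ℓ-group `A`:
`G ∈ ISP_U(A)`. -/
theorem lgroup_embeds_in_ultrapower (A : Type) [AddCommGroup A] [LinearOrder A] [IsOrderedAddMonoid A] [Nontrivial A]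
    (G : Type) [AddCommGroup G] [LinearOrder G] [IsOrderedAddMonoid G] :
    ∃ (ι : Type) (𝒰 : Ultrafilter ι) (f : G →+ Filter.Germ (𝒰 : Filter ι) A),
      Function.Injective f ∧ StrictMono f := by
  obtain ⟨b, hb⟩ := exists_ne (0 : A)
  choose φ hφ_mono hφ_add using fun S : Finset G =>
    exists_int_strictMonoOn_map_add S.finite_toSet
  let 𝒰 : Ultrafilter (Finset G) := .of atTop
  have hmem (x : G) : ∀ᶠ S in (𝒰 : Filter (Finset G)), x ∈ S :=
    Ultrafilter.of_le _ <| (eventually_ge_atTop {x}).mono fun S hS =>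
      hS (Finset.mem_singleton_self x)
  obtain ⟨f, hf⟩ := Filter.Germ.exists_addMonoidHom_strictMono 𝒰 (fun S g => φ S g • |b|)
    (fun x y => ((hmem x).and ((hmem y).and (hmem (x + y)))).mono fun S ⟨hx, hy, hxy⟩ => by
      simp only [hφ_add S x hx y hy hxy, add_zsmul])
    (fun x y hlt => ((hmem x).and (hmem y)).mono fun S ⟨hx, hy⟩ =>
      zsmul_lt_zsmul_left (abs_pos.2 hb) (hφ_mono S hx hy hlt))
  exact ⟨Finset G, 𝒰, f, hf.injective, hf⟩
end

section
/- A system of linear inequalities L : Fin r → (Fin n → ℤ) is full-dimensional if and only if for every linearly ordered abelian group G the set of solutions {g : Fin n → G | ∀ i, 0 ≤ ∑ j, (L i j) • g j} generates the group Fin n → G as an additive group, i.e. its AddSubgroup.closure equals ⊤. -/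
/-- A tuple `g` in a (pre)ordered abelian group is a solution of the system of linear
inequalities given by the integer matrix `L` if all the linear forms are nonnegative at `g`. -/
def IsSolution {r n : ℕ} (L : Fin r → Fin n → ℤ) {G : Type*} [AddCommGroup G] [Preorder G]
    (g : Fin n → G) : Prop :=
  ∀ i : Fin r, 0 ≤ ∑ j, (L i j) • g j

/-- A system of linear inequalities is full-dimensional if no nonzero integer linear form
vanishes on all of its rational solutions. -/
def FullDimensional {r n : ℕ} (L : Fin r → Fin n → ℤ) : Prop :=
  ¬ ∃ a : Fin n → ℤ, a ≠ 0 ∧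
      ∀ x : Fin n → ℚ, (∀ i : Fin r, 0 ≤ ∑ j, (L i j : ℚ) * x j) →
        ∑ j, (a j : ℚ) * x j = 0

/-!
If the system is full-dimensional, every nonzero row `Lᵢ` is strictly positive at some rational
solution; clearing denominators and adding these up gives an integer solution `x₀` at which every
nonzero row is `≥ 1`. In an ordered group `G`, given `g ∈ Gⁿ` choose `t ≥ 0` above every `-Lᵢ g`:
then `s = x₀ • t` and `g + s` are both solutions, and `g = (g + s) - s`.
Conversely, if the rational solutions generate `ℚⁿ`, an integer form `a` vanishing on them vanishes
everywhere, in particular at `a` itself, so `∑ aⱼ² = 0` and `a = 0`.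
-/

open Finset

section IntForm

variable {ι G : Type*} [Fintype ι] [AddCommGroup G]

def intForm (c : ι → ℤ) : (ι → G) →+ G where
  toFun g := ∑ j, c j • g j
  map_zero' := by simp
  map_add' g h := by simp only [Pi.add_apply, smul_add, sum_add_distrib]

lemma intForm_apply (c : ι → ℤ) (g : ι → G) : intForm c g = ∑ j, c j • g j := rfl

@[simp]
lemma intForm_zero : intForm (0 : ι → ℤ) = (0 : (ι → G) →+ G) := by
  ext; simp [intForm_apply]

lemma intForm_zsmul_const (c y : ι → ℤ) (t : G) :
    intForm c (fun j => y j • t) = intForm c y • t := by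
  simp only [intForm_apply, smul_eq_mul, sum_smul, mul_smul]

lemma intForm_intCast {R : Type*} [Ring R] (c y : ι → ℤ) :
    intForm c (fun j => (y j : R)) = ((intForm c y : ℤ) : R) := by
  simp [intForm_apply]

lemma intForm_rat (c : ι → ℤ) (x : ι → ℚ) : intForm c x = ∑ j, (c j : ℚ) * x j := by
  simp only [intForm_apply, zsmul_eq_mul]

end IntForm

lemma Rat.exists_pos_nat_mul_eq_intCast {ι : Type*} [Fintype ι] (x : ι → ℚ) :
    ∃ d : ℕ, 0 < d ∧ ∃ y : ι → ℤ, ∀ j, (y j : ℚ) = d * x j := by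
  refine ⟨∏ j, (x j).den, prod_pos fun j _ => (x j).den_pos, ?_⟩
  have (j : ι) : ∃ m : ℤ, (m : ℚ) = (∏ k, (x k).den : ℕ) * x j := by
    obtain ⟨c, hc⟩ := dvd_prod_of_mem (fun k => (x k).den) (mem_univ j)
    refine ⟨c * (x j).num, ?_⟩
    rw [hc]
    push_cast
    rw [mul_comm ((x j).den : ℚ), mul_assoc, Rat.den_mul_eq_num]
  choose y hy using this
  exact ⟨y, hy⟩

section Solutions

variable {r n : ℕ} (L : Fin r → Fin n → ℤ)

lemma isSolution_iff {G : Type*} [AddCommGroup G] [Preorder G] (g : Fin n → G) :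
    IsSolution L g ↔ ∀ i, 0 ≤ intForm (L i) g := Iff.rfl

def solutionCone (G : Type*) [AddCommGroup G] [PartialOrder G] [IsOrderedAddMonoid G] :
    AddSubmonoid (Fin n → G) where
  carrier := {g | IsSolution L g}
  add_mem' {g h} hg hh i := by
    show 0 ≤ intForm (L i) (g + h)
    rw [map_add]
    exact add_nonneg (hg i) (hh i)
  zero_mem' i := (map_zero (intForm (L i))).ge

lemma fullDimensional_iff : FullDimensional L ↔
    ¬ ∃ a : Fin n → ℤ, a ≠ 0 ∧ ∀ x : Fin n → ℚ, IsSolution L x → intForm a x = 0 := by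
  simp only [FullDimensional, isSolution_iff, intForm_rat]

variable {L}

lemma FullDimensional.exists_pos_rat_solution (hL : FullDimensional L) {i : Fin r}
    (hi : L i ≠ 0) : ∃ x : Fin n → ℚ, IsSolution L x ∧ 0 < intForm (L i) x := by
  by_contra! h
  exact (fullDimensional_iff L).1 hL
    ⟨L i, hi, fun x hx => le_antisymm (h x hx) (hx i)⟩

lemma exists_int_solution_of_rat_solution {x : Fin n → ℚ} (hx : IsSolution L x) :
    ∃ y : Fin n → ℤ, IsSolution L y ∧ ∀ i, 0 < intForm (L i) x → 0 < intForm (L i) y := by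
  obtain ⟨d, hd, y, hy⟩ := Rat.exists_pos_nat_mul_eq_intCast x
  have hyx (i : Fin r) : ((intForm (L i) y : ℤ) : ℚ) = d • intForm (L i) x := by
    rw [← intForm_intCast, ← map_nsmul (intForm (G := ℚ) (L i))]
    congr 1; ext j; simp [hy]
  refine ⟨y, fun i => ?_, fun i hi => ?_⟩
  · exact_mod_cast (hyx i).symm ▸ nsmul_nonneg (hx i) d
  · exact_mod_cast (hyx i).symm ▸ nsmul_pos hi hd.ne'

lemma FullDimensional.exists_int_interior_point (hL : FullDimensional L) :
    ∃ x₀ : Fin n → ℤ, IsSolution L x₀ ∧ ∀ i, L i ≠ 0 → 0 < intForm (L i) x₀ := by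
  have (i : Fin r) : ∃ y : Fin n → ℤ, IsSolution L y ∧ (L i ≠ 0 → 0 < intForm (L i) y) := by
    by_cases hi : L i = 0
    · exact ⟨0, (solutionCone L ℤ).zero_mem, absurd hi⟩
    obtain ⟨x, hx, hxi⟩ := hL.exists_pos_rat_solution hi
    obtain ⟨y, hy, hpos⟩ := exists_int_solution_of_rat_solution hx
    exact ⟨y, hy, fun _ => hpos i hxi⟩
  choose y hy hpos using this
  refine ⟨∑ k, y k, (solutionCone L ℤ).sum_mem fun k _ => hy k, fun i hi => ?_⟩
  rw [map_sum]
  exact sum_pos' (fun k _ => hy k i) ⟨i, mem_univ i, hpos i hi⟩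

lemma exists_isSolution_add_isSolution {G : Type*} [AddCommGroup G] [PartialOrder G]
    [IsOrderedAddMonoid G] [IsDirectedOrder G] {x₀ : Fin n → ℤ} (hx₀ : IsSolution L x₀)
    (hpos : ∀ i, L i ≠ 0 → 0 < intForm (L i) x₀) (g : Fin n → G) :
    ∃ s : Fin n → G, IsSolution L s ∧ IsSolution L (g + s) := by
  classical
  obtain ⟨t, ht⟩ := (insert 0 (univ.image fun i => -intForm (L i) g)).exists_le
  have ht₀ : 0 ≤ t := ht 0 (mem_insert_self _ _)
  have hgt (i : Fin r) : -intForm (L i) g ≤ t :=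
    ht _ (mem_insert_of_mem (mem_image_of_mem _ (mem_univ i)))
  refine ⟨fun j => x₀ j • t, (isSolution_iff L _).2 fun i => ?_,
    (isSolution_iff L _).2 fun i => ?_⟩
  · rw [intForm_zsmul_const]
    exact zsmul_nonneg ht₀ (hx₀ i)
  · by_cases hi : L i = 0
    · simp [hi]
    rw [map_add, intForm_zsmul_const, ← neg_le_iff_add_nonneg']
    calc -intForm (L i) g ≤ t := hgt i
      _ = (1 : ℤ) • t := (one_zsmul t).symm
      _ ≤ intForm (L i) x₀ • t := zsmul_le_zsmul_left ht₀ (Order.one_le_iff_pos.2 (hpos i hi))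

lemma closure_setOf_isSolution_eq_top {G : Type*} [AddCommGroup G] [PartialOrder G]
    [IsOrderedAddMonoid G] [IsDirectedOrder G] {x₀ : Fin n → ℤ} (hx₀ : IsSolution L x₀)
    (hpos : ∀ i, L i ≠ 0 → 0 < intForm (L i) x₀) :
    AddSubgroup.closure {g : Fin n → G | IsSolution L g} = ⊤ := by
  refine eq_top_iff.2 fun g _ => ?_
  obtain ⟨s, hs, hgs⟩ := exists_isSolution_add_isSolution hx₀ hpos g
  rw [← add_sub_cancel_right g s]
  exact sub_mem (AddSubgroup.subset_closure hgs) (AddSubgroup.subset_closure hs)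

lemma fullDimensional_of_closure_setOf_isSolution_eq_top
    (h : AddSubgroup.closure {x : Fin n → ℚ | IsSolution L x} = ⊤) : FullDimensional L := by
  refine (fullDimensional_iff L).2 ?_
  rintro ⟨a, ha, hva⟩
  have hφ : intForm a = (0 : (Fin n → ℚ) →+ ℚ) := AddMonoidHom.eq_of_eqOn_dense h hva
  have haa : ((intForm a a : ℤ) : ℚ) = 0 := by
    rw [← intForm_intCast, hφ, AddMonoidHom.zero_apply]
  exact ha (dotProduct_self_eq_zero.1 (by exact_mod_cast haa))

end Solutions

/-- A system of linear inequalities is full-dimensional iff for every linearly ordered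
abelian group `G` its set of solutions generates `Gⁿ` as a group. -/
theorem fullDimensional_iff_solutions_generate {r n : ℕ} (L : Fin r → Fin n → ℤ) :
    FullDimensional L ↔
      ∀ (G : Type) [AddCommGroup G] [LinearOrder G] [IsOrderedAddMonoid G],
        AddSubgroup.closure {g : Fin n → G | IsSolution L g} = ⊤ := by
  refine ⟨fun hL G _ _ _ => ?_,
    fun h => fullDimensional_of_closure_setOf_isSolution_eq_top (h ℚ)⟩
  obtain ⟨x₀, hx₀, hpos⟩ := hL.exists_int_interior_point
  exact closure_setOf_isSolution_eq_top hx₀ hpos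
end

section
/- Let T be a min–max term datum in n variables. Then there exist m ≥ 1, full-dimensional systems of linear inequalities α_1, …, α_m in n variables, and integer linear forms t_1, …, t_m : Fin n → ℤ such that for every linearly ordered abelian group G: (i) every tuple g : Fin n → G is a solution of at least one α_l, and (ii) whenever g is a solution of α_l, one has T_G(g) = ∑ j, (t_l j) • g j. -/
/-- A min–max term datum in `n` variables: a finite family `u` of integer linear forms
together with a nonempty finite family of nonempty subsets of the index set. -/
structure MinMaxTermDatum (n : ℕ) where
  p : ℕ
  u : Fin p → Fin n → ℤ
  q : ℕ
  hq : 0 < q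
  S : Fin q → Finset (Fin p)
  hS : ∀ i, (S i).Nonempty

/-- The function induced by a min–max term datum on an abelian ℓ-group:
the meet over the family of the joins of the corresponding integer linear forms. -/
def MinMaxTermDatum.eval {n : ℕ} (T : MinMaxTermDatum n) {G : Type*}
    [Lattice G] [AddCommGroup G] (g : Fin n → G) : G :=
  (Finset.univ : Finset (Fin T.q)).inf' ⟨⟨0, T.hq⟩, Finset.mem_univ _⟩
    fun i => (T.S i).sup' (T.hS i) fun j => ∑ l, (T.u j l) • g l

/-!
The choices of an index `σ i ∈ S i` realizing each join and of an index `c` realizing the meet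
cut out polyhedral cones on which the term is the linear form `u (σ c)`, and at every tuple some
choice is realized. To see that the full-dimensional cones already cover, transfer a tuple `g` to a
rational point `x` that keeps the strict signs of all differences `u a - u b` at `g` and at which
every nonzero difference is nonzero: perturb `g` lexicographically by a rational vector off all
the hyperplanes `u a = u b`, then move the resulting strict system to `ℚ` by Fourier–Motzkin
elimination. Choosing `σ` and `c` by maximizing and minimizing at `x` puts `g` in the cone and
`x` in its interior.
-/

lemma sum_zsmul_add_zsmul {n : ℕ} {M : Type*} [AddCommGroup M] (v w : Fin n → ℤ) (p q : ℤ)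
    (g : Fin n → M) :
    ∑ l, (p • v + q • w) l • g l = p • ∑ l, v l • g l + q • ∑ l, w l • g l := by
  simp only [Pi.add_apply, Pi.smul_apply, smul_eq_mul, add_smul, mul_smul, Finset.sum_add_distrib,
    Finset.smul_sum]

lemma sum_zsmul_sub {n : ℕ} {M : Type*} [AddCommGroup M] (v w : Fin n → ℤ) (g : Fin n → M) :
    ∑ l, (v - w) l • g l = ∑ l, v l • g l - ∑ l, w l • g l := by
  simp only [Pi.sub_apply, sub_smul, Finset.sum_sub_distrib]

lemma sum_zsmul_castSucc {n : ℕ} {M : Type*} [AddCommGroup M] (v : Fin (n + 1) → ℤ)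
    (y : Fin (n + 1) → M) :
    ∑ l, v l • y l = ∑ l, Fin.init v l • Fin.init y l + v (Fin.last n) • y (Fin.last n) :=
  Fin.sum_univ_castSucc _

lemma neg_zsmul_add_zsmul_pos {G : Type*} [AddCommGroup G] [LinearOrder G] [IsOrderedAddMonoid G]
    {a b t : G} {p q : ℤ} (hp : 0 < p) (hq : q < 0) (ha : 0 < a + p • t) (hb : 0 < b + q • t) :
    0 < (-q) • a + p • b := by
  have key : (-q) • (a + p • t) + p • (b + q • t) = (-q) • a + p • b := by module
  exact key ▸ add_pos (zsmul_pos ha (neg_pos.2 hq)) (zsmul_pos hb hp)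

lemma exists_forall_pos_add_mul {K ι : Type*} [Field K] [LinearOrder K] [IsStrictOrderedRing K]
    [Finite ι] (B c : ι → K) (hpair : ∀ a b, 0 < c a → c b < 0 → 0 < -c b * B a + c a * B b)
    (hzero : ∀ a, c a = 0 → 0 < B a) : ∃ t, ∀ i, 0 < B i + c i * t := by
  obtain ⟨t, hlo, hhi⟩ := (Set.finite_range fun a : {a // 0 < c a} => -B a / c a).exists_between'
    (Set.finite_range fun b : {b // c b < 0} => -B b / c b) (by
      rintro _ ⟨⟨a, ha⟩, rfl⟩ _ ⟨⟨b, hb⟩, rfl⟩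
      have hb' : 0 < -c b := neg_pos.2 hb
      dsimp only
      rw [← neg_div_neg_eq (-B b), div_lt_div_iff₀ ha hb']
      nlinarith [hpair a b ha hb])
  refine ⟨t, fun i => ?_⟩
  rcases lt_trichotomy (c i) 0 with hi | hi | hi
  · have := hhi _ ⟨⟨i, hi⟩, rfl⟩
    rw [lt_div_iff_of_neg hi] at this
    linarith
  · simpa [hi] using hzero i hi
  · have := hlo _ ⟨⟨i, hi⟩, rfl⟩
    rw [div_lt_iff₀ hi] at this
    linarith

/-- Fourier–Motzkin elimination: the last variable is eliminated by adding up, with positive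
coefficients cancelling it, each pair of inequalities in which it occurs with opposite signs. -/
theorem exists_forall_pos_of_forall_pos {K : Type*} [Field K] [LinearOrder K]
    [IsStrictOrderedRing K] {G : Type*} [AddCommGroup G] [LinearOrder G] [IsOrderedAddMonoid G] :
    ∀ {n : ℕ} {ι : Type*} [Finite ι] (d : ι → Fin n → ℤ) (g : Fin n → G),
      (∀ i, 0 < ∑ l, d i l • g l) → ∃ x : Fin n → K, ∀ i, 0 < ∑ l, d i l • x l
  | 0, _, _, _, _, hg => ⟨0, fun i => by simpa using hg i⟩
  | n + 1, ι, _, d, g, hg => by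
    set c : ι → ℤ := fun i => d i (Fin.last n)
    set e : ι → Fin n → ℤ := fun i => Fin.init (d i)
    have hg' (i : ι) : 0 < ∑ l, e i l • Fin.init g l + c i • g (Fin.last n) :=
      sum_zsmul_castSucc (d i) g ▸ hg i
    let d' : {p : ι × ι // 0 < c p.1 ∧ c p.2 < 0} ⊕ {i // c i = 0} → Fin n → ℤ :=
      Sum.elim (fun p => (-c p.1.2) • e p.1.1 + c p.1.1 • e p.1.2) (fun i => e i.1)
    obtain ⟨x', hx'⟩ := exists_forall_pos_of_forall_pos (K := K) d' (Fin.init g) <| by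
      rintro (⟨⟨a, b⟩, ha, hb⟩ | ⟨a, ha⟩)
      · simpa only [d', Sum.elim_inl, sum_zsmul_add_zsmul] using
          neg_zsmul_add_zsmul_pos ha hb (hg' a) (hg' b)
      · simpa [d', ha] using hg' a
    obtain ⟨t, ht⟩ := exists_forall_pos_add_mul (fun i => ∑ l, e i l • x' l) (fun i => (c i : K))
      (fun a b ha hb => by
        have h := hx' (.inl ⟨(a, b), Int.cast_pos.1 ha, Int.cast_lt_zero.1 hb⟩)
        dsimp only [d', Sum.elim_inl] at h
        rw [sum_zsmul_add_zsmul] at h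
        simpa only [zsmul_eq_mul, Int.cast_neg] using h)
      (fun a ha => hx' (.inr ⟨a, Int.cast_eq_zero.1 ha⟩))
    refine ⟨Fin.snoc x' t, fun i => ?_⟩
    rw [sum_zsmul_castSucc (d i), Fin.init_snoc, Fin.snoc_last, zsmul_eq_mul]
    exact ht i

lemma exists_forall_sum_zsmul_ne_zero {n : ℕ} {K ι : Type*} [Field K] [CharZero K] [Finite ι]
    (d : ι → Fin n → ℤ) : ∃ y : Fin n → K, ∀ i, d i ≠ 0 → ∑ l, d i l • y l ≠ 0 := by
  let f (i : {i // d i ≠ 0}) : Module.Dual K (Fin n → K) :=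
    ∑ l, (d i l : K) • LinearMap.proj l
  have hf (i : {i // d i ≠ 0}) (y : Fin n → K) : f i y = ∑ l, d i l • y l := by
    simp [f, Int.cast_smul_eq_zsmul]
  obtain ⟨y, hy⟩ := Module.Dual.exists_forall_ne_zero_of_forall_exists f fun ⟨i, hi⟩ => by
    obtain ⟨l, hl⟩ := Function.ne_iff.1 hi
    exact ⟨Pi.single l 1, by simpa [hf, Pi.single_apply] using hl⟩
  exact ⟨y, fun i hi => hf ⟨i, hi⟩ y ▸ hy ⟨i, hi⟩⟩

theorem exists_forall_sign_compatible {n : ℕ} {K : Type*} [Field K] [LinearOrder K]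
    [IsStrictOrderedRing K] {G : Type*} [AddCommGroup G] [LinearOrder G] [IsOrderedAddMonoid G]
    {ι : Type*} [Finite ι] (d : ι → Fin n → ℤ) (g : Fin n → G) :
    ∃ x : Fin n → K, ∀ i, (0 < ∑ l, d i l • g l → 0 < ∑ l, d i l • x l) ∧
      (d i ≠ 0 → ∑ l, d i l • x l ≠ 0) := by
  obtain ⟨y, hy⟩ := exists_forall_sum_zsmul_ne_zero (K := K) d
  -- `g'` is `g` moved infinitesimally towards `y`, which avoids every hyperplane `d i = 0`.
  let g' : Fin n → G ×ₗ K := fun l => toLex (g l, y l)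
  have hg' (v : Fin n → ℤ) : ∑ l, v l • g' l = toLex (∑ l, v l • g l, ∑ l, v l • y l) := by
    change ∑ l, v l • toLexAddEquiv _ (g l, y l) = toLexAddEquiv _ _
    simp_rw [← map_zsmul, ← map_sum, EmbeddingLike.apply_eq_iff_eq]
    ext <;> simp [Prod.fst_sum, Prod.snd_sum]
  have hne (i : ι) (hi : d i ≠ 0) : ∑ l, d i l • g' l ≠ 0 := fun h =>
    hy i hi (congrArg Prod.snd (toLex.injective ((hg' (d i)).symm.trans h)))
  let d'' (i : {i // d i ≠ 0}) : Fin n → ℤ := if 0 < ∑ l, d i l • g' l then d i else -d i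
  obtain ⟨x, hx⟩ := exists_forall_pos_of_forall_pos (K := K) d'' g' fun ⟨i, hi⟩ => by
    by_cases h : 0 < ∑ l, d i l • g' l
    · simp [d'', h]
    · simpa [d'', h, Finset.sum_neg_distrib] using (not_lt.1 h).lt_of_ne (hne i hi)
  refine ⟨x, fun i => ⟨fun hi => ?_, fun hi => ?_⟩⟩
  · have hi' : 0 < ∑ l, d i l • g' l := by
      rw [hg']
      exact Prod.Lex.toLex_lt_toLex.2 (Or.inl hi)
    have hdi : d i ≠ 0 := by rintro h; simp [h] at hi
    simpa [d'', hi'] using hx ⟨i, hdi⟩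
  · have := hx ⟨i, hi⟩
    by_cases h : 0 < ∑ l, d i l • g' l
    · simp only [d'', h, if_true] at this
      exact this.ne'
    · simp only [d'', h, if_false, Pi.neg_apply, neg_smul, Finset.sum_neg_distrib] at this
      exact (neg_pos.1 this).ne

lemma fullDimensional_of_forall_pos {r n : ℕ} (L : Fin r → Fin n → ℤ) (x : Fin n → ℚ)
    (hx : ∀ k, L k ≠ 0 → 0 < ∑ j, (L k j : ℚ) * x j) : FullDimensional L := by
  rintro ⟨a, ha, hvan⟩
  have expand (w : Fin n → ℤ) (N : ℚ) (v : Fin n → ℚ) :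
      ∑ j, (w j : ℚ) * (N * x j + v j) = N * ∑ j, (w j : ℚ) * x j + ∑ j, (w j : ℚ) * v j := by
    simp only [mul_add, Finset.sum_add_distrib, Finset.mul_sum, mul_left_comm]
  have hsol (v : Fin n → ℚ) :
      ∀ᶠ N in Filter.atTop, ∀ k, 0 ≤ ∑ j, (L k j : ℚ) * (N * x j + v j) := by
    refine Filter.eventually_all.2 fun k => ?_
    by_cases hk : L k = 0
    · simp [hk]
    filter_upwards [Filter.eventually_ge_atTop (-(∑ j, (L k j : ℚ) * v j) / ∑ j, (L k j : ℚ) * x j)]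
      with N hN
    rw [div_le_iff₀ (hx k hk)] at hN
    linarith [expand (L k) N v]
  have hax : ∑ j, (a j : ℚ) * x j = 0 := hvan x fun k => by
    by_cases hk : L k = 0
    · simp [hk]
    · exact (hx k hk).le
  refine ha (funext fun b => ?_)
  obtain ⟨N, hN⟩ := (hsol (Pi.single b 1)).exists
  have := hvan _ hN
  rw [expand, hax] at this
  simpa [Pi.single_apply] using this

namespace MinMaxTermDatum

variable {n : ℕ} (T : MinMaxTermDatum n)

/-- The inequalities cutting out the cone on which `σ i` realizes the join over `S i` for every
`i` and `σ c` realizes the meet of these joins. -/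
def cellRows (σ : Fin T.q → Fin T.p) (c : Fin T.q) : (Σ i, T.S i) ⊕ Fin T.q → Fin n → ℤ
  | .inl ⟨i, j⟩ => T.u (σ i) - T.u j
  | .inr i => T.u (σ i) - T.u (σ c)

noncomputable def cellSystem (σ : Fin T.q → Fin T.p) (c : Fin T.q) :
    Fin (Fintype.card ((Σ i, T.S i) ⊕ Fin T.q)) → Fin n → ℤ :=
  T.cellRows σ c ∘ (Fintype.equivFin _).symm

lemma isSolution_cellSystem_iff {σ : Fin T.q → Fin T.p} {c : Fin T.q} {G : Type*}
    [AddCommGroup G] [PartialOrder G] [IsOrderedAddMonoid G] {g : Fin n → G} :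
    IsSolution (T.cellSystem σ c) g ↔ ∀ k, 0 ≤ ∑ l, T.cellRows σ c k l • g l :=
  Equiv.forall_congr_right (q := fun k => 0 ≤ ∑ l, T.cellRows σ c k l • g l) _

theorem eval_eq_of_isSolution_cellSystem {σ : Fin T.q → Fin T.p} {c : Fin T.q}
    (hσ : ∀ i, σ i ∈ T.S i) {G : Type*} [Lattice G] [AddCommGroup G] [IsOrderedAddMonoid G]
    {g : Fin n → G} (hg : IsSolution (T.cellSystem σ c) g) :
    T.eval g = ∑ l, T.u (σ c) l • g l := by
  rw [isSolution_cellSystem_iff] at hg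
  have hjoin (i : Fin T.q) (j : Fin T.p) (hj : j ∈ T.S i) :
      ∑ l, T.u j l • g l ≤ ∑ l, T.u (σ i) l • g l := by
    simpa [cellRows, sub_smul, sub_nonneg] using hg (.inl ⟨i, j, hj⟩)
  have hmeet (i : Fin T.q) : ∑ l, T.u (σ c) l • g l ≤ ∑ l, T.u (σ i) l • g l := by
    simpa [cellRows, sub_smul, sub_nonneg] using hg (.inr i)
  refine le_antisymm (Finset.inf'_le_of_le _ (Finset.mem_univ c) ?_)
    (Finset.le_inf' _ _ fun i _ => Finset.le_sup'_of_le _ (hσ i) (hmeet i))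
  exact Finset.sup'_le _ _ fun j hj => hjoin c j hj

theorem exists_cellSystem {G : Type*} [AddCommGroup G] [LinearOrder G] [IsOrderedAddMonoid G]
    (g : Fin n → G) :
    ∃ σ c, (∀ i, σ i ∈ T.S i) ∧ IsSolution (T.cellSystem σ c) g ∧
      FullDimensional (T.cellSystem σ c) := by
  obtain ⟨x, hx⟩ := exists_forall_sign_compatible (K := ℚ)
    (fun ab : Fin T.p × Fin T.p => T.u ab.1 - T.u ab.2) g
  let F (j : Fin T.p) : ℚ := ∑ l, T.u j l • x l
  choose σ hσS hσ using fun i => (T.S i).exists_max_image F (T.hS i)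
  obtain ⟨c, -, hc⟩ :=
    Finset.univ.exists_min_image (fun i => F (σ i)) ⟨⟨0, T.hq⟩, Finset.mem_univ _⟩
  have hrow (k) : ∃ a b, T.cellRows σ c k = T.u a - T.u b ∧ F b ≤ F a := by
    rcases k with ⟨i, j, hj⟩ | i
    exacts [⟨_, _, rfl, hσ i j hj⟩, ⟨_, _, rfl, hc i (Finset.mem_univ i)⟩]
  refine ⟨σ, c, hσS, T.isSolution_cellSystem_iff.2 fun k => ?_,
    fullDimensional_of_forall_pos _ x fun k hk => ?_⟩
  · obtain ⟨a, b, hk, hab⟩ := hrow k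
    rw [hk, sum_zsmul_sub, sub_nonneg]
    by_contra! h
    have := (hx (b, a)).1 (by rwa [sum_zsmul_sub, sub_pos])
    rw [sum_zsmul_sub, sub_pos] at this
    exact this.not_ge hab
  · obtain ⟨a, b, hk', hab⟩ := hrow ((Fintype.equivFin _).symm k)
    change T.cellSystem σ c k = _ at hk'
    rw [hk'] at hk ⊢
    have hne := (hx (a, b)).2 hk
    simp only [← zsmul_eq_mul, sum_zsmul_sub] at hne ⊢
    exact (sub_nonneg.2 hab).lt_of_ne' hne

end MinMaxTermDatum

/-- Every min–max term is piecewise linear: there are finitely many full-dimensional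
systems of linear inequalities covering every tuple in every linearly ordered abelian
group, on each of which the term agrees with an integer linear form. -/
theorem minMaxTerm_piecewise_linear {n : ℕ} (T : MinMaxTermDatum n) :
    ∃ m : ℕ, 0 < m ∧
      ∃ (r : Fin m → ℕ) (α : (l : Fin m) → Fin (r l) → Fin n → ℤ)
        (t : Fin m → Fin n → ℤ),
        (∀ l : Fin m, FullDimensional (α l)) ∧
        ∀ (G : Type) [AddCommGroup G] [LinearOrder G] [IsOrderedAddMonoid G] (g : Fin n → G),
          (∃ l : Fin m, IsSolution (α l) g) ∧
          ∀ l : Fin m, IsSolution (α l) g → T.eval g = ∑ j, (t l j) • g j := by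
  let Cell := {v : (Fin T.q → Fin T.p) × Fin T.q //
    (∀ i, v.1 i ∈ T.S i) ∧ FullDimensional (T.cellSystem v.1 v.2)}
  let e : Fin (Nat.card Cell) ≃ Cell := (Finite.equivFin Cell).symm
  have hCell (G : Type) [AddCommGroup G] [LinearOrder G] [IsOrderedAddMonoid G] (g : Fin n → G) :
      ∃ v : Cell, IsSolution (T.cellSystem v.1.1 v.1.2) g := by
    obtain ⟨σ, c, hσ, hg, hfull⟩ := T.exists_cellSystem g
    exact ⟨⟨(σ, c), hσ, hfull⟩, hg⟩
  refine ⟨Nat.card Cell, (hCell ℤ 0).elim fun v _ => Nat.card_pos_iff.2 ⟨⟨v⟩, inferInstance⟩, _,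
    fun l => T.cellSystem (e l).1.1 (e l).1.2, fun l => T.u ((e l).1.1 (e l).1.2),
    fun l => (e l).2.2, fun G _ _ _ g =>
      ⟨?_, fun l => T.eval_eq_of_isSolution_cellSystem (e l).2.1⟩⟩
  obtain ⟨v, hv⟩ := hCell G g
  exact ⟨e.symm v, by simpa using hv⟩
end

section
/- Let G be a linearly ordered abelian group, k a positive integer, and a : Fin m → Fin n → ℤ a matrix of integers. Let d be the greatest common divisor of k together with all the entries a j i, and write k = d * k'. If for every j : Fin m and every tuple g : Fin n → G there exists h ∈ G with k • h = ∑ i, (a j i) • g i, then every element of G is divisible by k', i.e. for every x ∈ G there exists h ∈ G with k' • h = x. -/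
/-!
The integers `c` for which `c • x` is divisible by `k` form an ideal of `ℤ`. Taking `g = x` in
one coordinate and `0` elsewhere shows that it contains every entry of `a`; it also contains `k`,
hence the gcd `d`. So `k • h = d • x` for some `h`, i.e. `d • (k' • h) = d • x`, and since an
ordered group is torsion-free, `k' • h = x`.
-/

section DivisibleCoeffs

variable {G : Type*} [AddCommGroup G]

def divisibleCoeffs (k : ℕ) (x : G) : Ideal ℤ :=
  (LinearMap.range (k • LinearMap.id : G →ₗ[ℤ] G)).comap (LinearMap.toSpanSingleton ℤ G x)

theorem mem_divisibleCoeffs {k : ℕ} {x : G} {c : ℤ} :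
    c ∈ divisibleCoeffs k x ↔ ∃ h : G, k • h = c • x := by
  simp [divisibleCoeffs]

theorem natCast_mem_divisibleCoeffs (k : ℕ) (x : G) : (k : ℤ) ∈ divisibleCoeffs k x :=
  mem_divisibleCoeffs.2 ⟨x, (natCast_zsmul x k).symm⟩

end DivisibleCoeffs

theorem Int.natCast_gcd_finsetGcd_natAbs_mem {ι : Type*} {I : Ideal ℤ} {k : ℕ} {s : Finset ι}
    {f : ι → ℤ} (hk : (k : ℤ) ∈ I) (hf : ∀ i ∈ s, f i ∈ I) :
    ((k.gcd (s.gcd fun i => (f i).natAbs) : ℕ) : ℤ) ∈ I := by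
  open Submodule.IsPrincipal in
  rw [mem_iff_generator_dvd, Int.dvd_natCast]
  refine Nat.dvd_gcd (Int.natAbs_dvd_natAbs.2 ((mem_iff_generator_dvd I).1 hk)) ?_
  exact Finset.dvd_gcd fun i hi => Int.natAbs_dvd_natAbs.2 ((mem_iff_generator_dvd I).1 (hf i hi))

/-- Let `k > 0` and let `a` be an integer matrix.  Let `d` be the gcd of `k` together with
all entries of `a`, and `k' := k / d` (so `k = d * k'`).  If in a linearly ordered abelian
group `G` every value `∑ i, a j i • g i` of one of the rows is divisible by `k`, then every
element of `G` is divisible by `k'`. -/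
theorem divisible_by_quotient_gcd {m n : ℕ} (G : Type) [AddCommGroup G] [LinearOrder G] [IsOrderedAddMonoid G]
    (k : ℕ) (hk : 0 < k) (a : Fin m → Fin n → ℤ)
    (hdiv : ∀ (j : Fin m) (g : Fin n → G), ∃ h : G, k • h = ∑ i, (a j i) • g i) :
    ∀ x : G, ∃ h : G,
      (k / Nat.gcd k ((Finset.univ : Finset (Fin m × Fin n)).gcd
        fun ji => (a ji.1 ji.2).natAbs)) • h = x := by
  intro x
  have entry_mem (ji : Fin m × Fin n) : a ji.1 ji.2 ∈ divisibleCoeffs k x := by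
    obtain ⟨h, hh⟩ := hdiv ji.1 (Pi.single ji.2 x)
    exact mem_divisibleCoeffs.2 ⟨h, by simpa [Pi.single_apply] using hh⟩
  obtain ⟨h, hh⟩ := mem_divisibleCoeffs.1 <|
    Int.natCast_gcd_finsetGcd_natAbs_mem (s := Finset.univ) (natCast_mem_divisibleCoeffs k x)
      fun ji _ => entry_mem ji
  set d := k.gcd ((Finset.univ : Finset (Fin m × Fin n)).gcd fun ji => (a ji.1 ji.2).natAbs)
  have hd : d ≠ 0 := (Nat.gcd_pos_of_pos_left _ hk).ne'
  refine ⟨h, (nsmul_right_inj hd).1 ?_⟩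
  rw [smul_smul, Nat.mul_div_cancel' (Nat.gcd_dvd_left _ _), hh, natCast_zsmul]
end

section
/- Let G be a linearly ordered abelian group and let D be an additive subgroup of G that is divisible (for every positive integer n and every d ∈ D there exists e ∈ D with n • e = d). If G satisfies an EFD-system φ in the language 𝓛 of ℓ-groups, then D, with its induced linearly ordered abelian group structure (hence the induced 𝓛-structure, where the lattice operations are max and min), also satisfies φ. -/
open FirstOrder Language

/-- The binary function symbols of the language of ℓ-groups: `+`, `∨`, `∧`. -/
inductive LGrpBin : Type
  | add : LGrpBin
  | join : LGrpBin
  | meet : LGrpBin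

/-- Function symbols of the language of ℓ-groups: a constant `0`, a unary `-`,
and binary `+`, `∨`, `∧`. -/
def LGrpFunc : ℕ → Type
  | 0 => Unit
  | 1 => Unit
  | 2 => LGrpBin
  | _ => Empty

/-- The first-order language of (abelian) ℓ-groups. -/
def LGrpLang : FirstOrder.Language :=
  ⟨LGrpFunc, fun _ => Empty⟩

/-- The evident `LGrpLang`-structure on any abelian ℓ-group. -/
instance lgrpStructure (G : Type*) [Lattice G] [AddCommGroup G] :
    LGrpLang.Structure G where
  funMap {n} f x :=
    match n, f, x with
    | 0, _, _ => 0
    | 1, _, x => -(x 0)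
    | 2, LGrpBin.add, x => x 0 + x 1
    | 2, LGrpBin.join, x => x 0 ⊔ x 1
    | 2, LGrpBin.meet, x => x 0 ⊓ x 1
    | (_+3), f, _ => f.elim
  RelMap {_} r := r.elim

/-- An EFD-system in a language `L`: data for an EFD-sentence
`∀ x_1 … x_n ∃! z_1 … z_m, ⋀_{i<r} s_i(x̄,z̄) = t_i(x̄,z̄)` with `m, r ≥ 1`. -/
structure EFDSystem (L : FirstOrder.Language) where
  n : ℕ
  m : ℕ
  r : ℕ
  hm : 0 < m
  hr : 0 < r
  lhs : Fin r → L.Term (Fin n ⊕ Fin m)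
  rhs : Fin r → L.Term (Fin n ⊕ Fin m)

/-- A structure `G` satisfies an EFD-system if for every tuple `x` there is exactly one
tuple `z` solving all the equations. -/
def EFDSystem.Satisfies {L : FirstOrder.Language} (φ : EFDSystem L)
    (G : Type*) [L.Structure G] : Prop :=
  ∀ x : Fin φ.n → G, ∃! z : Fin φ.m → G, ∀ i : Fin φ.r,
    Term.realize (Sum.elim x z) (φ.lhs i) = Term.realize (Sum.elim x z) (φ.rhs i)

/-!
Given parameters `x` in `D`, let `z` be the unique solution in `G`; it suffices to show that every
`z j` lies in `D`. Along a ray `K • a + g • v` (with `g ≥ 0` small compared with `K`), every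
ℓ-group term agrees with a single integer linear form. If some `z j ∉ D`, then, `G ⧸ D` being
torsion-free by divisibility, a functional on the span of the classes of the `z j` gives an integer
direction `v` with `v j ≠ 0` that is orthogonal to every integer relation among the `z j`
modulo `D`. For a large scale `K` and a small `ε > 0`, both `K • z` and `K • z + ε • v` then solve
the system for the parameters `K • x`, contradicting uniqueness.
-/

section Embedding

variable {L : Language} {M N : Type*} [L.Structure M] [L.Structure N]

theorem EFDSystem.Satisfies.of_embedding {φ : EFDSystem L} (hN : φ.Satisfies N) (e : M ↪[L] N)
    (hsol : ∀ (x : Fin φ.n → M) (z : Fin φ.m → N),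
      (∀ i, (φ.lhs i).realize (Sum.elim (e ∘ x) z) = (φ.rhs i).realize (Sum.elim (e ∘ x) z)) →
      ∀ j, z j ∈ Set.range e) :
    φ.Satisfies M := by
  intro x
  obtain ⟨z, hz, huniq⟩ := hN (e ∘ x)
  choose w hw using hsol x z hz
  have hsolves (y : Fin φ.m → M) :
      (∀ i, (φ.lhs i).realize (Sum.elim x y) = (φ.rhs i).realize (Sum.elim x y)) ↔
        ∀ i, (φ.lhs i).realize (Sum.elim (e ∘ x) (e ∘ y)) =
          (φ.rhs i).realize (Sum.elim (e ∘ x) (e ∘ y)) := by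
    simp only [← Sum.comp_elim, HomClass.realize_term, e.injective.eq_iff]
  have hzw : e ∘ w = z := funext hw
  refine ⟨w, (hsolves w).2 (hzw ▸ hz), fun y hy => e.injective.comp_left ?_⟩
  exact (huniq _ ((hsolves y).1 hy)).trans hzw.symm

end Embedding

def AddSubgroup.lgrpEmbedding {G : Type*} [AddCommGroup G] [LinearOrder G] [IsOrderedAddMonoid G]
    (D : AddSubgroup G) : D ↪[LGrpLang] G where
  toEmbedding := Function.Embedding.subtype _
  map_fun' {n} f _ :=
    match n, f with
    | 0, _ => rfl
    | 1, _ => rfl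
    | 2, .add => rfl
    | 2, .join => (Subtype.mono_coe _).map_max
    | 2, .meet => (Subtype.mono_coe _).map_min
    | _ + 3, f => f.elim
  map_rel' r := r.elim

theorem LGrpLang.realize_mem_of_closed {H : Type*} [Lattice H] [AddCommGroup H] {α : Type*}
    (P : ((α → H) → H) → Prop) (var : ∀ i, P fun y => y i) (zero : P fun _ => 0)
    (neg : ∀ f, P f → P fun y => -f y)
    (add : ∀ f₁ f₂, P f₁ → P f₂ → P fun y => f₁ y + f₂ y)
    (sup : ∀ f₁ f₂, P f₁ → P f₂ → P fun y => f₁ y ⊔ f₂ y)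
    (inf : ∀ f₁ f₂, P f₁ → P f₂ → P fun y => f₁ y ⊓ f₂ y) (t : LGrpLang.Term α) :
    P fun y => t.realize y := by
  induction t with
  | var i => exact var i
  | @func l f ts ih =>
    match l, f, ts, ih with
    | 0, _, _, _ => exact zero
    | 1, _, _, ih => exact neg _ (ih 0)
    | 2, .add, _, ih => exact add _ _ (ih 0) (ih 1)
    | 2, .join, _, ih => exact sup _ _ (ih 0) (ih 1)
    | 2, .meet, _, ih => exact inf _ _ (ih 0) (ih 1)
    | _ + 3, f, _, _ => exact f.elim

/-- `g ≥ 0` small compared with `K`: scaling `K` up instead of shrinking `g` is what lets the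
linearization below work in discrete or non-archimedean groups. -/
def ForSmallRatio {G : Type*} [AddMonoid G] [Preorder G] (P : ℕ → G → Prop) : Prop :=
  ∃ (M : ℕ) (ε : G), 0 < ε ∧ ∀ K g, 0 ≤ g → M • g ≤ K • ε → P K g

namespace ForSmallRatio

theorem mono {G : Type*} [AddMonoid G] [Preorder G] {P Q : ℕ → G → Prop} (h : ForSmallRatio P)
    (hPQ : ∀ K g, P K g → Q K g) : ForSmallRatio Q :=
  let ⟨M, ε, hε, hP⟩ := h
  ⟨M, ε, hε, fun K g hg hMg => hPQ K g (hP K g hg hMg)⟩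

variable {G : Type*} [AddCommGroup G] [LinearOrder G] [IsOrderedAddMonoid G] {P Q : ℕ → G → Prop}

theorem and (hP : ForSmallRatio P) (hQ : ForSmallRatio Q) :
    ForSmallRatio fun K g => P K g ∧ Q K g := by
  obtain ⟨M₁, ε₁, hε₁, h₁⟩ := hP
  obtain ⟨M₂, ε₂, hε₂, h₂⟩ := hQ
  have weaken {M : ℕ} {ε : G} (hM : M ≤ max M₁ M₂) (hε : min ε₁ ε₂ ≤ ε) {K : ℕ} {g : G}
      (hg : 0 ≤ g) (h : max M₁ M₂ • g ≤ K • min ε₁ ε₂) : M • g ≤ K • ε :=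
    (nsmul_le_nsmul_left hg hM).trans (h.trans (nsmul_le_nsmul_right hε K))
  exact ⟨max M₁ M₂, min ε₁ ε₂, lt_min hε₁ hε₂, fun K g hg h =>
    ⟨h₁ K g hg (weaken (le_max_left ..) (min_le_left ..) hg h),
      h₂ K g hg (weaken (le_max_right ..) (min_le_right ..) hg h)⟩⟩

theorem of_nonneg [Nontrivial G] (h : ∀ K g, 0 ≤ g → P K g) : ForSmallRatio P :=
  let ⟨p, hp⟩ := exists_zero_lt (α := G)
  ⟨0, p, hp, fun K g hg _ => h K g hg⟩

theorem forall_finite [Nontrivial G] {ι : Type*} [Finite ι] {P : ι → ℕ → G → Prop}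
    (h : ∀ i, ForSmallRatio (P i)) : ForSmallRatio fun K g => ∀ i, P i K g := by
  classical
  cases nonempty_fintype ι
  suffices ∀ s : Finset ι, ForSmallRatio fun K g => ∀ i ∈ s, P i K g by
    simpa using this Finset.univ
  intro s
  induction s using Finset.induction_on with
  | empty => exact of_nonneg fun _ _ _ => by simp
  | insert i s _ ih => exact ((h i).and ih).mono fun K g => by simp

theorem zsmul_le (d : ℤ) {A : G} (hA : 0 < A) : ForSmallRatio fun K g => d • g ≤ K • A :=
  ⟨d.natAbs, A, hA, fun K g hg h =>
    (zsmul_le_zsmul_left hg d.le_natAbs).trans (by rwa [natCast_zsmul])⟩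

theorem add_zsmul_le_of_toLex_le [Nontrivial G] {A₁ A₂ : G} {d₁ d₂ : ℤ}
    (h : toLex (A₁, d₁) ≤ toLex (A₂, d₂)) :
    ForSmallRatio fun K g => K • A₁ + d₁ • g ≤ K • A₂ + d₂ • g := by
  rcases Prod.Lex.toLex_le_toLex.1 h with hA | ⟨hA, hd : d₁ ≤ d₂⟩ <;> dsimp only at hA
  · refine (zsmul_le (d₁ - d₂) (sub_pos.2 hA)).mono fun K g hKg => ?_
    rw [← sub_nonneg]
    convert sub_nonneg.2 hKg using 1
    rw [sub_zsmul, nsmul_sub]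
    abel
  · exact of_nonneg fun K g hg => by
      rw [hA]
      exact add_le_add le_rfl (zsmul_le_zsmul_left hg hd)

end ForSmallRatio

section Ray

variable {α : Type*} [Fintype α]

def ray {G : Type*} [AddCommGroup G] (a : α → G) (v : α → ℤ) (K : ℕ) (g : G) : α → G :=
  fun j => K • a j + v j • g

theorem sum_zsmul_ray {G : Type*} [AddCommGroup G] (a : α → G) (v : α → ℤ) (c : α → ℤ) (K : ℕ)
    (g : G) : ∑ j, c j • ray a v K g j = K • ∑ j, c j • a j + (c ⬝ᵥ v) • g := by
  simp only [ray, smul_add, Finset.sum_add_distrib, Finset.smul_sum, dotProduct, Finset.sum_smul,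
    smul_comm (c _) K, mul_smul]

def IsLinearNearRay {G : Type*} [AddCommGroup G] [Preorder G] (a : α → G) (v : α → ℤ)
    (f : (α → G) → G) : Prop :=
  ∃ c : α → ℤ, ForSmallRatio fun K g => f (ray a v K g) = ∑ j, c j • ray a v K g j

theorem IsLinearNearRay.neg {G : Type*} [AddCommGroup G] [Preorder G] {a : α → G} {v : α → ℤ}
    {f : (α → G) → G} (h : IsLinearNearRay a v f) : IsLinearNearRay a v fun y => -f y :=
  let ⟨c, hc⟩ := h
  ⟨-c, hc.mono fun K g e => by simp [e]⟩

variable {G : Type*} [AddCommGroup G] [LinearOrder G] [IsOrderedAddMonoid G] (a : α → G)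
  (v : α → ℤ)

theorem linearForm_le_or_ge [Nontrivial G] (c₁ c₂ : α → ℤ) :
    (ForSmallRatio fun K g => ∑ j, c₁ j • ray a v K g j ≤ ∑ j, c₂ j • ray a v K g j) ∨
      ForSmallRatio fun K g => ∑ j, c₂ j • ray a v K g j ≤ ∑ j, c₁ j • ray a v K g j := by
  simp only [sum_zsmul_ray]
  rcases le_total (toLex (∑ j, c₁ j • a j, c₁ ⬝ᵥ v)) (toLex (∑ j, c₂ j • a j, c₂ ⬝ᵥ v)) with h | h
  exacts [.inl (ForSmallRatio.add_zsmul_le_of_toLex_le h),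
    .inr (ForSmallRatio.add_zsmul_le_of_toLex_le h)]

variable {a v}

namespace IsLinearNearRay

variable {f₁ f₂ : (α → G) → G}

theorem apply [Nontrivial G] [DecidableEq α] (i : α) : IsLinearNearRay a v fun y => y i :=
  ⟨Pi.single i 1, .of_nonneg fun K g _ => by simp [Pi.single_apply]⟩

theorem zero [Nontrivial G] : IsLinearNearRay a v fun _ => 0 :=
  ⟨0, .of_nonneg fun K g _ => by simp⟩

theorem add (h₁ : IsLinearNearRay a v f₁) (h₂ : IsLinearNearRay a v f₂) :
    IsLinearNearRay a v fun y => f₁ y + f₂ y :=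
  let ⟨c₁, hc₁⟩ := h₁
  let ⟨c₂, hc₂⟩ := h₂
  ⟨c₁ + c₂, (hc₁.and hc₂).mono fun K g ⟨e₁, e₂⟩ => by
    simp [e₁, e₂, add_zsmul, Finset.sum_add_distrib]⟩

theorem sup [Nontrivial G] (h₁ : IsLinearNearRay a v f₁) (h₂ : IsLinearNearRay a v f₂) :
    IsLinearNearRay a v fun y => f₁ y ⊔ f₂ y := by
  obtain ⟨c₁, hc₁⟩ := h₁
  obtain ⟨c₂, hc₂⟩ := h₂
  rcases linearForm_le_or_ge a v c₁ c₂ with h | h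
  · exact ⟨c₂, (hc₁.and (hc₂.and h)).mono fun K g ⟨e₁, e₂, hle⟩ => by
      simp only [e₁, e₂, sup_eq_right.2 hle]⟩
  · exact ⟨c₁, (hc₁.and (hc₂.and h)).mono fun K g ⟨e₁, e₂, hle⟩ => by
      simp only [e₁, e₂, sup_eq_left.2 hle]⟩

theorem inf [Nontrivial G] (h₁ : IsLinearNearRay a v f₁) (h₂ : IsLinearNearRay a v f₂) :
    IsLinearNearRay a v fun y => f₁ y ⊓ f₂ y := by
  obtain ⟨c₁, hc₁⟩ := h₁
  obtain ⟨c₂, hc₂⟩ := h₂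
  rcases linearForm_le_or_ge a v c₁ c₂ with h | h
  · exact ⟨c₁, (hc₁.and (hc₂.and h)).mono fun K g ⟨e₁, e₂, hle⟩ => by
      simp only [e₁, e₂, inf_eq_left.2 hle]⟩
  · exact ⟨c₂, (hc₁.and (hc₂.and h)).mono fun K g ⟨e₁, e₂, hle⟩ => by
      simp only [e₁, e₂, inf_eq_right.2 hle]⟩

end IsLinearNearRay

theorem isLinearNearRay_realize [Nontrivial G] (t : LGrpLang.Term α) :
    IsLinearNearRay a v fun y => t.realize y := by
  classical
  exact LGrpLang.realize_mem_of_closed _ IsLinearNearRay.apply .zero (fun _ => .neg)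
    (fun _ _ => .add) (fun _ _ => .sup) (fun _ _ => .inf) t

end Ray

theorem EFDSystem.Satisfies.eq_zero_of_forall_dotProduct_eq_zero {G : Type*} [AddCommGroup G]
    [LinearOrder G] [IsOrderedAddMonoid G] [Nontrivial G] {φ : EFDSystem LGrpLang}
    (hG : φ.Satisfies G) (S : AddSubgroup G) {x : Fin φ.n → G} (hx : ∀ i, x i ∈ S)
    {z : Fin φ.m → G}
    (hz : ∀ i, (φ.lhs i).realize (Sum.elim x z) = (φ.rhs i).realize (Sum.elim x z))
    {v : Fin φ.m → ℤ} (hv : ∀ u : Fin φ.m → ℤ, ∑ j, u j • z j ∈ S → u ⬝ᵥ v = 0) : v = 0 := by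
  set a := Sum.elim x z
  set w : Fin φ.n ⊕ Fin φ.m → ℤ := Sum.elim 0 v
  choose cl hl using fun i => isLinearNearRay_realize (a := a) (v := w) (φ.lhs i)
  choose cr hr using fun i => isLinearNearRay_realize (a := a) (v := w) (φ.rhs i)
  obtain ⟨M, ε, hε, hlin⟩ := ForSmallRatio.forall_finite fun i => (hl i).and (hr i)
  have hray (K : ℕ) (g : G) : ray a w K g = Sum.elim (K • x) fun j => K • z j + v j • g := by
    ext (i | j) <;> simp [ray, a, w]
  have hagree (i : Fin φ.r) (K : ℕ) (g : G) :
      ∑ q, cl i q • ray a w K g q = ∑ q, cr i q • ray a w K g q := by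
    have hbase : ∑ q, cl i q • a q = ∑ q, cr i q • a q := by
      have h := hlin 1 0 le_rfl (by simpa using hε.le) i
      have hray₁ : ray a w 1 0 = a := by ext; simp [ray]
      dsimp only at h
      rw [hray₁] at h
      rw [← h.1, ← h.2, hz i]
    have hdir : cl i ⬝ᵥ w = cr i ⬝ᵥ w := by
      rw [← sub_eq_zero, ← sub_dotProduct]
      have hS : ∑ j, (cl i - cr i) (Sum.inr j) • z j ∈ S := by
        have h0 : ∑ q, (cl i - cr i) q • a q = 0 := by
          simp [sub_smul, Finset.sum_sub_distrib, hbase]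
        simp only [Fintype.sum_sum_type, a, Sum.elim_inl, Sum.elim_inr] at h0
        rw [eq_neg_of_add_eq_zero_right h0]
        exact S.neg_mem (sum_mem fun i _ => S.zsmul_mem (hx i) _)
      simpa [dotProduct, Fintype.sum_sum_type, w] using hv _ hS
    rw [sum_zsmul_ray, sum_zsmul_ray, hbase, hdir]
  have hsol {g : G} (hg : 0 ≤ g) (hgε : g ≤ ε) (i : Fin φ.r) :
      (φ.lhs i).realize (ray a w M g) = (φ.rhs i).realize (ray a w M g) := by
    have h := hlin M g hg (nsmul_le_nsmul_right hgε M) i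
    dsimp only at h
    rw [h.1, h.2, hagree]
  have hshift := (hG (M • x)).unique (hray M 0 ▸ hsol le_rfl hε.le) (hray M ε ▸ hsol hε.le le_rfl)
  ext j
  simpa [hε.ne'] using congrFun hshift j

theorem exists_orthogonal_relations_ne_zero {R Q ι : Type*} [CommRing R] [IsDomain R]
    [IsPrincipalIdealRing R] [AddCommGroup Q] [Module R Q] [Module.IsTorsionFree R Q] [Fintype ι]
    (y : ι → Q) {j : ι} (hj : y j ≠ 0) :
    ∃ v : ι → R, v j ≠ 0 ∧ ∀ u : ι → R, ∑ i, u i • y i = 0 → u ⬝ᵥ v = 0 := by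
  have : Module.Finite R (Submodule.span R (Set.range y)) :=
    Module.Finite.span_of_finite R (Set.finite_range y)
  let y' (i : ι) : Submodule.span R (Set.range y) := ⟨y i, Submodule.subset_span ⟨i, rfl⟩⟩
  obtain ⟨f, hf⟩ := Module.Projective.exists_dual_ne_zero R (x := y' j) (by simpa [y'] using hj)
  refine ⟨fun i => f (y' i), hf, fun u hu => ?_⟩
  have hu' : ∑ i, u i • y' i = 0 := Subtype.ext (by simpa [y'] using hu)
  have := congrArg f hu'
  rw [map_sum] at this
  simpa [dotProduct] using this

theorem AddSubgroup.nsmulSaturated_of_divisible {G : Type*} [AddCommGroup G] [IsAddTorsionFree G]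
    (D : AddSubgroup G) (hdiv : ∀ n : ℕ, 0 < n → ∀ d : D, ∃ e : D, n • e = d) :
    D.NSMulSaturated := by
  intro n g hg
  rcases Nat.eq_zero_or_pos n with hn | hn
  · exact .inl hn
  obtain ⟨e, he⟩ := hdiv n hn ⟨_, hg⟩
  have : (e : G) = g :=
    IsAddTorsionFree.nsmul_right_injective hn.ne' (by simpa using congrArg Subtype.val he)
  exact .inr (this ▸ e.2)

theorem AddSubmonoid.NSMulSaturated.isTorsionFree_quotient {G : Type*} [AddCommGroup G]
    {D : AddSubgroup G} (hD : D.NSMulSaturated) : Module.IsTorsionFree ℤ (G ⧸ D) := by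
  refine .of_smul_eq_zero fun r q hrq => ?_
  induction q using QuotientAddGroup.induction_on with | H g => ?_
  rw [← QuotientAddGroup.mk_zsmul, QuotientAddGroup.eq_zero_iff] at hrq
  simpa [QuotientAddGroup.eq_zero_iff] using AddSubgroup.saturated_iff_zsmul.1 hD r g hrq

/-- If a linearly ordered abelian group `G` satisfies an EFD-sentence `φ`, then so does
every divisible subgroup `D` of `G` (with its induced linearly ordered group structure,
where the lattice operations are `max` and `min`). -/
theorem efd_satisfies_divisible_subgroup (G : Type) [AddCommGroup G] [LinearOrder G] [IsOrderedAddMonoid G]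
    (D : AddSubgroup G)
    (hdiv : ∀ n : ℕ, 0 < n → ∀ d : D, ∃ e : D, n • e = d)
    (φ : EFDSystem LGrpLang) (hG : φ.Satisfies G) :
    φ.Satisfies D := by
  have := (D.nsmulSaturated_of_divisible hdiv).isTorsionFree_quotient
  refine hG.of_embedding D.lgrpEmbedding fun x z hz j => ?_
  by_contra hj
  have hzj : (z j : G ⧸ D) ≠ 0 := fun h => hj ⟨⟨z j, (QuotientAddGroup.eq_zero_iff _).1 h⟩, rfl⟩
  have : Nontrivial G := ⟨z j, 0, fun h => hzj (by simp [h])⟩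
  obtain ⟨v, hvj, hv⟩ := exists_orthogonal_relations_ne_zero (R := ℤ) (fun k => (z k : G ⧸ D)) hzj
  refine hvj (congrFun (hG.eq_zero_of_forall_dotProduct_eq_zero D (fun i => (x i).2) hz
    fun u hu => hv u ?_) j)
  simpa [← QuotientAddGroup.mk_zsmul, ← QuotientAddGroup.mk_sum] using
    (QuotientAddGroup.eq_zero_iff _).2 hu
end

section
/- If an EFD-system φ in the language 𝓛 of ℓ-groups is satisfied by some nontrivial abelian ℓ-group, then every divisible linearly ordered abelian group satisfies φ. -/
open FirstOrder Language

/-! Over a totally ordered group every ℓ-group term is piecewise linear, so the solutions of `φ`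
form a finite union of regions cut out by homogeneous integer linear inequalities, the same
regions in every totally ordered group. By Fourier–Motzkin elimination such a system has a
solution in some ordered abelian group iff it has one in `ℤ` (passing through `ℚ`), and over a
divisible group every solution of the projection of a region along the `z`-variables lifts.

Uniqueness: two distinct solutions over `D` give an integer point with two distinct solutions,
which `k ↦ k • a` (`0 < a`) carries to two distinct solutions in `A`.
Existence: choose an integer point at which the projected inequalities have the same truth
values as at `x`. Its image in `A` has a solution; in a totally ordered quotient of `A` (by a
prime solid subgroup) that solution lies in some region, whose projection therefore holds at `x`
and lifts to a solution over `D`. -/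

universe u

section LeOrLt

variable {α β : Type*}

def LeOrLt [Preorder α] : Bool → α → α → Prop
  | true, a, b => a < b
  | false, a, b => a ≤ b

@[simp] lemma leOrLt_true [Preorder α] {a b : α} : LeOrLt true a b ↔ a < b := Iff.rfl

@[simp] lemma leOrLt_false [Preorder α] {a b : α} : LeOrLt false a b ↔ a ≤ b := Iff.rfl

lemma LeOrLt.le [Preorder α] {s : Bool} {a b : α} (h : LeOrLt s a b) : a ≤ b := by
  cases s
  exacts [h, le_of_lt h]

lemma leOrLt_of_lt [Preorder α] (s : Bool) {a b : α} (h : a < b) : LeOrLt s a b := by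
  cases s
  exacts [h.le, h]

lemma leOrLt_self_iff [Preorder α] {s : Bool} {a : α} : LeOrLt s a a ↔ s = false := by
  cases s <;> simp

lemma StrictMono.leOrLt_iff [LinearOrder α] [Preorder β] {f : α → β} (hf : StrictMono f)
    {s : Bool} {a b : α} : LeOrLt s (f a) (f b) ↔ LeOrLt s a b := by
  cases s
  exacts [hf.le_iff_le, hf.lt_iff_lt]

variable [AddCommGroup α] [LinearOrder α] [IsOrderedAddMonoid α] {s s' : Bool} {a b : α}

lemma leOrLt_sub_iff : LeOrLt s 0 (b - a) ↔ LeOrLt s a b := by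
  cases s <;> simp [sub_nonneg, sub_pos]

lemma leOrLt_zsmul_iff {k : ℤ} (hk : 0 < k) : LeOrLt s 0 (k • a) ↔ LeOrLt s 0 a := by
  simpa using (zsmul_strictMono_right α hk).leOrLt_iff (s := s) (a := 0) (b := a)

lemma LeOrLt.add (ha : LeOrLt s 0 a) (hb : LeOrLt s' 0 b) : LeOrLt (s || s') 0 (a + b) := by
  cases s <;> cases s' <;> simp only [Bool.or_true, Bool.or_false, leOrLt_true, leOrLt_false] at *
  exacts [add_nonneg ha hb, add_pos_of_nonneg_of_pos ha hb, add_pos_of_pos_of_nonneg ha hb,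
    add_pos ha hb]

lemma not_leOrLt_iff : ¬ LeOrLt s 0 a ↔ LeOrLt (!s) 0 (-a) := by
  cases s <;> simp

end LeOrLt

theorem exists_leOrLt_between {α κ : Type*} [LinearOrder α] [DenselyOrdered α] [NoMaxOrder α]
    [NoMinOrder α] [Nonempty α] (L U : List κ) (β : κ → α) (s : κ → Bool)
    (h : ∀ l ∈ L, ∀ u ∈ U, LeOrLt (s l || s u) (β l) (β u)) :
    ∃ t, (∀ l ∈ L, LeOrLt (s l) (β l) t) ∧ ∀ u ∈ U, LeOrLt (s u) t (β u) := by
  obtain ⟨a, ha⟩ : ∃ a, ∀ l ∈ L, β l < a := by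
    obtain ⟨a₀, ha₀⟩ := (L.finite_toSet.image β).bddAbove
    obtain ⟨a, ha⟩ := exists_gt a₀
    exact ⟨a, fun l hl => (ha₀ ⟨l, hl, rfl⟩).trans_lt ha⟩
  obtain ⟨b, hb⟩ : ∃ b, ∀ u ∈ U, b < β u := by
    obtain ⟨b₀, hb₀⟩ := (U.finite_toSet.image β).bddBelow
    obtain ⟨b, hb⟩ := exists_lt b₀
    exact ⟨b, fun u hu => hb.trans_le (hb₀ ⟨u, hu, rfl⟩)⟩
  by_cases hL : L = []
  · exact ⟨b, by simp [hL], fun u hu => leOrLt_of_lt _ (hb u hu)⟩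
  by_cases hU : U = []
  · exact ⟨a, fun l hl => leOrLt_of_lt _ (ha l hl), by simp [hU]⟩
  obtain ⟨l₀, hl₀⟩ := L.exists_mem_of_ne_nil hL
  obtain ⟨u₀, hu₀⟩ := U.exists_mem_of_ne_nil hU
  obtain ⟨lm, hlm, hlmax⟩ := Set.exists_max_image {l | l ∈ L} β L.finite_toSet ⟨l₀, hl₀⟩
  obtain ⟨um, hum, humin⟩ := Set.exists_min_image {u | u ∈ U} β U.finite_toSet ⟨u₀, hu₀⟩
  rcases (h lm hlm um hum).le.lt_or_eq with hlt | heq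
  · obtain ⟨t, hlt, htu⟩ := exists_between hlt
    exact ⟨t, fun l hl => leOrLt_of_lt _ ((hlmax l hl).trans_lt hlt),
      fun u hu => leOrLt_of_lt _ (htu.trans_le (humin u hu))⟩
  · refine ⟨β lm, fun l hl => ?_, fun u hu => ?_⟩
    · cases hs : s l
      · exact hlmax l hl
      · simpa [hs, heq] using h l hl um hum
    · cases hs : s u
      · exact heq ▸ humin u hu
      · simpa [hs] using h lm hlm u hu

section Divisible

variable {D : Type*} [AddCommGroup D]

lemma exists_zsmul_eq_of_divisible (hdiv : ∀ n : ℕ, 0 < n → ∀ g : D, ∃ h : D, n • h = g)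
    {k : ℤ} (hk : k ≠ 0) (g : D) : ∃ h : D, k • h = g := by
  obtain ⟨h, hh⟩ := hdiv k.natAbs (Int.natAbs_pos.2 hk) g
  rcases Int.natAbs_eq k with hk' | hk'
  · exact ⟨h, by rw [hk', natCast_zsmul, hh]⟩
  · exact ⟨-h, by rw [hk', neg_zsmul, zsmul_neg, neg_neg, natCast_zsmul, hh]⟩

lemma denselyOrdered_of_divisible [LinearOrder D] [IsOrderedAddMonoid D]
    (hdiv : ∀ n : ℕ, 0 < n → ∀ g : D, ∃ h : D, n • h = g) : DenselyOrdered D := by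
  refine ⟨fun a b hab => ?_⟩
  obtain ⟨m, hm⟩ := hdiv 2 two_pos (a + b)
  refine ⟨m, lt_of_nsmul_lt_nsmul_right 2 ?_, lt_of_nsmul_lt_nsmul_right 2 ?_⟩
  · rw [hm, two_nsmul]
    exact add_lt_add_right hab a
  · rw [hm, two_nsmul]
    exact add_lt_add_left hab b

end Divisible

section LinearForms

variable {ι G H : Type*} [Fintype ι] [AddCommGroup G] [AddCommGroup H]

def evalForm (ℓ : ι → ℤ) (y : ι → G) : G := ∑ i, ℓ i • y i

@[simp] lemma evalForm_zero (y : ι → G) : evalForm 0 y = 0 := by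
  simp [evalForm]

@[simp] lemma evalForm_add (ℓ m : ι → ℤ) (y : ι → G) :
    evalForm (ℓ + m) y = evalForm ℓ y + evalForm m y := by
  simp [evalForm, add_smul, Finset.sum_add_distrib]

@[simp] lemma evalForm_neg (ℓ : ι → ℤ) (y : ι → G) : evalForm (-ℓ) y = -evalForm ℓ y := by
  simp [evalForm]

@[simp] lemma evalForm_sub (ℓ m : ι → ℤ) (y : ι → G) :
    evalForm (ℓ - m) y = evalForm ℓ y - evalForm m y := by
  simp [sub_eq_add_neg]

@[simp] lemma evalForm_smul (k : ℤ) (ℓ : ι → ℤ) (y : ι → G) :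
    evalForm (k • ℓ) y = k • evalForm ℓ y := by
  simp [evalForm, mul_smul, Finset.smul_sum]

@[simp] lemma evalForm_single [DecidableEq ι] (i : ι) (y : ι → G) :
    evalForm (Pi.single i 1) y = y i := by
  simp [evalForm, Pi.single_apply]

lemma map_evalForm (f : G →+ H) (ℓ : ι → ℤ) (y : ι → G) :
    f (evalForm ℓ y) = evalForm ℓ (f ∘ y) := by
  simp [evalForm, map_sum, map_zsmul]

lemma evalForm_congr {ℓ : ι → ℤ} {y y' : ι → G} (h : ∀ i, ℓ i ≠ 0 → y i = y' i) :
    evalForm ℓ y = evalForm ℓ y' := by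
  refine Finset.sum_congr rfl fun i _ => ?_
  by_cases hi : ℓ i = 0
  · simp [hi]
  · rw [h i hi]

lemma evalForm_update [DecidableEq ι] (ℓ : ι → ℤ) (y : ι → G) (v : ι) (d : G) :
    evalForm ℓ (Function.update y v d) = ℓ v • d + evalForm ℓ (Function.update y v 0) := by
  have : Function.update y v d = Function.update y v 0 + Pi.single v d := by
    ext i
    by_cases hi : i = v <;> simp [hi]
  rw [this]
  simp [evalForm, smul_add, Finset.sum_add_distrib, Pi.single_apply, add_comm]

end LinearForms

structure LinIneq (ι : Type*) where
  coeff : ι → ℤ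
  strict : Bool

namespace LinIneq

variable {ι G H : Type*}

def Holds [Fintype ι] [AddCommGroup G] [Preorder G] (c : LinIneq ι) (y : ι → G) : Prop :=
  LeOrLt c.strict 0 (evalForm c.coeff y)

def neg (c : LinIneq ι) : LinIneq ι := ⟨-c.coeff, !c.strict⟩

def combine (v : ι) (c d : LinIneq ι) : LinIneq ι :=
  ⟨(-d.coeff v) • c.coeff + c.coeff v • d.coeff, c.strict || d.strict⟩

/-- One step of Fourier–Motzkin elimination of the variable `v`. -/
def elim (v : ι) (S : List (LinIneq ι)) : List (LinIneq ι) :=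
  S.filter (·.coeff v = 0) ++
    (S.filter (0 < ·.coeff v)).flatMap fun l => (S.filter (·.coeff v < 0)).map (combine v l)

def elimAll (vs : List ι) (S : List (LinIneq ι)) : List (LinIneq ι) :=
  vs.foldr elim S

lemma mem_elim {v : ι} {S : List (LinIneq ι)} {c : LinIneq ι} :
    c ∈ elim v S ↔ (c ∈ S ∧ c.coeff v = 0) ∨
      ∃ l ∈ S, 0 < l.coeff v ∧ ∃ u ∈ S, u.coeff v < 0 ∧ combine v l u = c := by
  simp [elim, and_assoc]

lemma coeff_combine_self (v : ι) (c d : LinIneq ι) : (combine v c d).coeff v = 0 := by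
  simp [combine, mul_comm]

lemma coeff_eq_zero_of_mem_elimAll {vs : List ι} {S : List (LinIneq ι)} {v : ι} (hv : v ∈ vs)
    {c : LinIneq ι} (hc : c ∈ elimAll vs S) : c.coeff v = 0 := by
  induction vs generalizing c with
  | nil => simp at hv
  | cons w vs ih =>
    rcases mem_elim.1 hc with ⟨hc, hcw⟩ | ⟨l, hl, -, u, hu, -, rfl⟩
    · rcases List.mem_cons.1 hv with rfl | hv
      exacts [hcw, ih hv hc]
    · rcases List.mem_cons.1 hv with rfl | hv
      · exact coeff_combine_self _ _ _
      · simp [combine, ih hv hl, ih hv hu]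

variable [Fintype ι] {c : LinIneq ι}

lemma holds_congr [AddCommGroup G] [Preorder G] {y y' : ι → G}
    (h : ∀ i, c.coeff i ≠ 0 → y i = y' i) : c.Holds y ↔ c.Holds y' := by
  rw [Holds, Holds, evalForm_congr h]

lemma holds_comp_iff [AddCommGroup G] [LinearOrder G] [AddCommGroup H] [Preorder H]
    (f : G →+ H) (hf : StrictMono f) (y : ι → G) : c.Holds (f ∘ y) ↔ c.Holds y := by
  rw [Holds, Holds, ← map_evalForm, ← hf.leOrLt_iff, map_zero]

lemma holds_iff_of_coeff_eq_zero [AddCommGroup G] [Preorder G] (hc : c.coeff = 0)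
    (y : ι → G) : c.Holds y ↔ c.strict = false := by
  rw [Holds, hc, evalForm_zero, leOrLt_self_iff]

lemma holds_nonneg_iff [AddCommGroup G] [Preorder G] {ℓ : ι → ℤ} {y : ι → G} :
    (⟨ℓ, false⟩ : LinIneq ι).Holds y ↔ 0 ≤ evalForm ℓ y :=
  Iff.rfl

@[simp] lemma holds_neg_iff [AddCommGroup G] [LinearOrder G] [IsOrderedAddMonoid G]
    (y : ι → G) : c.neg.Holds y ↔ ¬ c.Holds y := by
  rw [Holds, Holds, not_leOrLt_iff, neg, evalForm_neg]

lemma evalForm_combine [AddCommGroup G] (v : ι) (c d : LinIneq ι) (y : ι → G) :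
    evalForm (combine v c d).coeff y =
      (-d.coeff v) • evalForm c.coeff y + c.coeff v • evalForm d.coeff y := by
  rw [combine, evalForm_add, evalForm_smul, evalForm_smul]

lemma Holds.combine [AddCommGroup G] [LinearOrder G] [IsOrderedAddMonoid G] {v : ι}
    {l u : LinIneq ι} {y : ι → G} (hl : 0 < l.coeff v) (hu : u.coeff v < 0) (hly : l.Holds y)
    (huy : u.Holds y) : (combine v l u).Holds y := by
  rw [Holds, evalForm_combine]
  exact ((leOrLt_zsmul_iff (neg_pos.2 hu)).2 hly).add ((leOrLt_zsmul_iff hl).2 huy)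

end LinIneq

open LinIneq

section Systems

variable {ι D : Type*} [Fintype ι]

def AllHold [AddCommGroup D] [Preorder D] (S : List (LinIneq ι)) (y : ι → D) : Prop :=
  ∀ c ∈ S, c.Holds y

lemma allHold_append [AddCommGroup D] [Preorder D] {S T : List (LinIneq ι)} {y : ι → D} :
    AllHold (S ++ T) y ↔ AllHold S y ∧ AllHold T y :=
  List.forall_mem_append

lemma allHold_singleton [AddCommGroup D] [Preorder D] {c : LinIneq ι} {y : ι → D} :
    AllHold [c] y ↔ c.Holds y :=
  List.forall_mem_singleton

variable [AddCommGroup D] [LinearOrder D] [IsOrderedAddMonoid D]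

lemma allHold_elim {v : ι} {S : List (LinIneq ι)} {y : ι → D} (h : AllHold S y) :
    AllHold (elim v S) y := by
  intro c hc
  rcases mem_elim.1 hc with ⟨hc, -⟩ | ⟨l, hl, hlv, u, hu, huv, rfl⟩
  · exact h c hc
  · exact (h l hl).combine hlv huv (h u hu)

lemma allHold_elimAll {vs : List ι} {S : List (LinIneq ι)} {y : ι → D} (h : AllHold S y) :
    AllHold (elimAll vs S) y := by
  induction vs with
  | nil => exact h
  | cons v vs ih => exact allHold_elim ih

variable [DecidableEq ι] [Nontrivial D] (hdiv : ∀ n : ℕ, 0 < n → ∀ g : D, ∃ h : D, n • h = g)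
include hdiv

theorem exists_allHold_update_of_allHold_elim {v : ι} {S : List (LinIneq ι)} {y : ι → D}
    (h : AllHold (elim v S) y) : ∃ d, AllHold S (Function.update y v d) := by
  have := denselyOrdered_of_divisible hdiv
  -- `β c` is the value of the `v`-coordinate at which the inequality `c` is tight.
  have hroot : ∀ c : LinIneq ι, ∃ β : D, c.coeff v ≠ 0 →
      ∀ d, evalForm c.coeff (Function.update y v d) = c.coeff v • (d - β) := by
    intro c
    by_cases hc : c.coeff v = 0
    · exact ⟨0, fun h => absurd hc h⟩
    obtain ⟨β, hβ⟩ :=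
      exists_zsmul_eq_of_divisible hdiv hc (-evalForm c.coeff (Function.update y v 0))
    exact ⟨β, fun _ d => by rw [evalForm_update, smul_sub, hβ, sub_neg_eq_add]⟩
  choose β hβ using hroot
  have hlow : ∀ c, 0 < c.coeff v → ∀ d,
      c.Holds (Function.update y v d) ↔ LeOrLt c.strict (β c) d := fun c hc d => by
    rw [Holds, hβ c hc.ne' d, leOrLt_zsmul_iff hc, leOrLt_sub_iff]
  have hup : ∀ c, c.coeff v < 0 → ∀ d,
      c.Holds (Function.update y v d) ↔ LeOrLt c.strict d (β c) := fun c hc d => by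
    rw [Holds, hβ c hc.ne d, ← neg_sub, smul_neg, ← neg_smul, leOrLt_zsmul_iff (neg_pos.2 hc),
      leOrLt_sub_iff]
  obtain ⟨t, htl, htu⟩ := exists_leOrLt_between (S.filter (0 < ·.coeff v))
    (S.filter (·.coeff v < 0)) β LinIneq.strict fun l hl u hu => by
      simp only [List.mem_filter, decide_eq_true_eq] at hl hu
      have hcomb := h _ (mem_elim.2 (Or.inr ⟨l, hl.1, hl.2, u, hu.1, hu.2, rfl⟩))
      have hval : evalForm (combine v l u).coeff y = (l.coeff v * -u.coeff v) • (β u - β l) := by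
        rw [evalForm_combine, ← Function.update_eq_self v y, hβ l hl.2.ne', hβ u hu.2.ne]
        module
      rwa [Holds, hval, leOrLt_zsmul_iff (mul_pos hl.2 (neg_pos.2 hu.2)), leOrLt_sub_iff] at hcomb
  refine ⟨t, fun c hc => ?_⟩
  rcases lt_trichotomy (c.coeff v) 0 with hneg | hzero | hpos
  · exact (hup c hneg t).2 (htu c (by simp [hc, hneg]))
  · refine (holds_congr fun i hi => ?_).1 (h c (mem_elim.2 (Or.inl ⟨hc, hzero⟩)))
    rw [Function.update_of_ne (by rintro rfl; exact hi hzero)]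
  · exact (hlow c hpos t).2 (htl c (by simp [hc, hpos]))

theorem exists_allHold_of_allHold_elimAll {vs : List ι} {S : List (LinIneq ι)} {y : ι → D}
    (h : AllHold (elimAll vs S) y) : ∃ y' : ι → D, (∀ i ∉ vs, y' i = y i) ∧ AllHold S y' := by
  induction vs generalizing y with
  | nil => exact ⟨y, fun _ _ => rfl, h⟩
  | cons v vs ih =>
    obtain ⟨d, hd⟩ := exists_allHold_update_of_allHold_elim hdiv h
    obtain ⟨y', hy', hS⟩ := ih hd
    refine ⟨y', fun i hi => ?_, hS⟩
    rw [hy' i (fun h => hi (List.mem_cons_of_mem v h)),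
      Function.update_of_ne (by rintro rfl; exact hi List.mem_cons_self)]

end Systems

lemma exists_nat_mul_eq_intCast {ι : Type*} [Fintype ι] (p : ι → ℚ) :
    ∃ N : ℕ, 0 < N ∧ ∃ w : ι → ℤ, ∀ i, (w i : ℚ) = N * p i := by
  refine ⟨∏ i, (p i).den, Finset.prod_pos fun i _ => (p i).pos, ?_⟩
  have hdvd : ∀ i, (p i).den ∣ ∏ j, (p j).den :=
    fun i => Finset.dvd_prod_of_mem _ (Finset.mem_univ i)
  refine ⟨fun i => ((∏ j, (p j).den) / (p i).den : ℕ) * (p i).num, fun i => ?_⟩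
  rw [Int.cast_mul, Int.cast_natCast, Nat.cast_div (hdvd i) (by exact_mod_cast (p i).den_nz),
    div_mul_eq_mul_div, mul_div_assoc, Rat.num_div_den]

section IntegerSolutions

variable {ι D : Type*} [Fintype ι] [AddCommGroup D] [LinearOrder D] [IsOrderedAddMonoid D]

theorem exists_int_of_allHold {S : List (LinIneq ι)} {y : ι → D} (h : AllHold S y) :
    ∃ w : ι → ℤ, AllHold S w := by
  classical
  -- after eliminating every variable only the trivial inequality `0 ≤ 0` can remain
  have hground : AllHold (elimAll Finset.univ.toList S) (0 : ι → ℚ) := fun c hc => by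
    have hc0 : c.coeff = 0 := funext fun i => coeff_eq_zero_of_mem_elimAll (by simp) hc
    exact (holds_iff_of_coeff_eq_zero hc0 _).2
      ((holds_iff_of_coeff_eq_zero hc0 y).1 (allHold_elimAll h c hc))
  obtain ⟨p, -, hp⟩ := exists_allHold_of_allHold_elimAll (D := ℚ)
    (fun n hn g => ⟨g / n, by simp [nsmul_eq_mul, mul_div_cancel₀, hn.ne']⟩) hground
  obtain ⟨N, hN, w, hw⟩ := exists_nat_mul_eq_intCast p
  refine ⟨w, fun c hc => ?_⟩
  have hwp : Int.castAddHom ℚ ∘ w = AddMonoidHom.mulLeft (N : ℚ) ∘ p := funext hw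
  rw [← holds_comp_iff (Int.castAddHom ℚ) Int.cast_strictMono, hwp,
    holds_comp_iff _ (strictMono_mul_left_of_pos (by exact_mod_cast hN))]
  exact hp c hc

theorem exists_int_holds_iff (E : List (LinIneq ι)) (y : ι → D) :
    ∃ w : ι → ℤ, ∀ c ∈ E, c.Holds w ↔ c.Holds y := by
  classical
  let sign (c : LinIneq ι) : LinIneq ι := if c.Holds y then c else c.neg
  have hsign : ∀ c, (sign c).Holds y := fun c => by
    by_cases hc : c.Holds y <;> simp [sign, hc]
  obtain ⟨w, hw⟩ := exists_int_of_allHold (S := E.map sign) (y := y)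
    (List.forall_mem_map.2 fun c _ => hsign c)
  refine ⟨w, fun c hc => ?_⟩
  have hcw := hw _ (List.mem_map_of_mem hc)
  by_cases hcy : c.Holds y
  · simpa [sign, hcy] using hcw
  · simp only [sign, if_neg hcy, holds_neg_iff] at hcw
    exact iff_of_false hcw hcy

end IntegerSolutions

section Piecewise

variable {ι G : Type*}

/-- A region, given by linear inequalities, together with a linear form. -/
abbrev Piece (ι : Type*) := List (LinIneq ι) × (ι → ℤ)

def negPieces (Ps : List (Piece ι)) : List (Piece ι) :=
  Ps.map fun P => (P.1, -P.2)

def addPieces (Ps Qs : List (Piece ι)) : List (Piece ι) :=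
  Ps.flatMap fun P => Qs.map fun Q => (P.1 ++ Q.1, P.2 + Q.2)

def supPieces (Ps Qs : List (Piece ι)) : List (Piece ι) :=
  Ps.flatMap fun P => Qs.flatMap fun Q =>
    [(P.1 ++ Q.1 ++ [⟨P.2 - Q.2, false⟩], P.2), (P.1 ++ Q.1 ++ [⟨Q.2 - P.2, false⟩], Q.2)]

def infPieces (Ps Qs : List (Piece ι)) : List (Piece ι) :=
  negPieces (supPieces (negPieces Ps) (negPieces Qs))

def pieces [DecidableEq ι] : LGrpLang.Term ι → List (Piece ι)
  | .var i => [([], Pi.single i 1)]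
  | .func (l := 0) _ _ => [([], 0)]
  | .func (l := 1) _ ts => negPieces (pieces (ts 0))
  | .func (l := 2) .add ts => addPieces (pieces (ts 0)) (pieces (ts 1))
  | .func (l := 2) .join ts => supPieces (pieces (ts 0)) (pieces (ts 1))
  | .func (l := 2) .meet ts => infPieces (pieces (ts 0)) (pieces (ts 1))
  | .func (l := _ + 3) f _ => f.elim

variable [Fintype ι]

section Preorder

variable [AddCommGroup G] [Preorder G]

def Represents (Ps : List (Piece ι)) (f : (ι → G) → G) : Prop :=
  (∀ P ∈ Ps, ∀ y : ι → G, AllHold P.1 y → f y = evalForm P.2 y) ∧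
    ∀ y : ι → G, ∃ P ∈ Ps, AllHold P.1 y

variable {Ps Qs : List (Piece ι)} {f g : (ι → G) → G}

lemma represents_single [DecidableEq ι] (i : ι) :
    Represents [([], Pi.single i 1)] fun y : ι → G => y i :=
  ⟨by simp, fun _ => ⟨_, List.mem_singleton_self _, by simp [AllHold]⟩⟩

lemma represents_zero : Represents [([], 0)] fun _ : ι → G => 0 :=
  ⟨by simp, fun _ => ⟨_, List.mem_singleton_self _, by simp [AllHold]⟩⟩

lemma Represents.neg (hP : Represents Ps f) : Represents (negPieces Ps) fun y => -f y := by
  refine ⟨fun P hP' y hy => ?_, fun y => ?_⟩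
  · obtain ⟨P, hPs, rfl⟩ := List.mem_map.1 hP'
    simp [hP.1 P hPs y hy]
  · obtain ⟨P, hPs, hy⟩ := hP.2 y
    exact ⟨_, List.mem_map_of_mem hPs, hy⟩

lemma Represents.add (hP : Represents Ps f) (hQ : Represents Qs g) :
    Represents (addPieces Ps Qs) fun y => f y + g y := by
  refine ⟨fun R hR y hy => ?_, fun y => ?_⟩
  · simp only [addPieces, List.mem_flatMap, List.mem_map] at hR
    obtain ⟨P, hPs, Q, hQs, rfl⟩ := hR
    rw [allHold_append] at hy
    simp [hP.1 P hPs y hy.1, hQ.1 Q hQs y hy.2]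
  · obtain ⟨P, hPs, hPy⟩ := hP.2 y
    obtain ⟨Q, hQs, hQy⟩ := hQ.2 y
    exact ⟨_, List.mem_flatMap.2 ⟨P, hPs, List.mem_map_of_mem hQs⟩, allHold_append.2 ⟨hPy, hQy⟩⟩

end Preorder

variable [AddCommGroup G] [LinearOrder G] [IsOrderedAddMonoid G]
  {Ps Qs : List (Piece ι)} {f g : (ι → G) → G}

lemma Represents.sup (hP : Represents Ps f) (hQ : Represents Qs g) :
    Represents (supPieces Ps Qs) fun y => f y ⊔ g y := by
  refine ⟨fun R hR y hy => ?_, fun y => ?_⟩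
  · simp only [supPieces, List.mem_flatMap, List.mem_cons, List.not_mem_nil, or_false] at hR
    obtain ⟨P, hPs, Q, hQs, rfl | rfl⟩ := hR <;>
    · rw [allHold_append, allHold_append, allHold_singleton, holds_nonneg_iff, evalForm_sub,
        sub_nonneg] at hy
      simp only [hP.1 P hPs y hy.1.1, hQ.1 Q hQs y hy.1.2]
      simp [hy.2]
  · obtain ⟨P, hPs, hPy⟩ := hP.2 y
    obtain ⟨Q, hQs, hQy⟩ := hQ.2 y
    have hguard : ∀ ℓ : ι → ℤ, 0 ≤ evalForm ℓ y → AllHold (P.1 ++ Q.1 ++ [⟨ℓ, false⟩]) y :=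
      fun ℓ hℓ => allHold_append.2 ⟨allHold_append.2 ⟨hPy, hQy⟩, allHold_singleton.2 hℓ⟩
    rcases le_total (g y) (f y) with hle | hle
    · refine ⟨_, List.mem_flatMap.2 ⟨P, hPs, List.mem_flatMap.2 ⟨Q, hQs, List.mem_cons_self⟩⟩,
        hguard _ ?_⟩
      rwa [evalForm_sub, sub_nonneg, ← hP.1 P hPs y hPy, ← hQ.1 Q hQs y hQy]
    · refine ⟨_, List.mem_flatMap.2 ⟨P, hPs, List.mem_flatMap.2 ⟨Q, hQs,
        List.mem_cons_of_mem _ List.mem_cons_self⟩⟩, hguard _ ?_⟩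
      rwa [evalForm_sub, sub_nonneg, ← hP.1 P hPs y hPy, ← hQ.1 Q hQs y hQy]

lemma Represents.inf (hP : Represents Ps f) (hQ : Represents Qs g) :
    Represents (infPieces Ps Qs) fun y => f y ⊓ g y := by
  simpa [infPieces, neg_sup] using (hP.neg.sup hQ.neg).neg

theorem represents_pieces [DecidableEq ι] (t : LGrpLang.Term ι) :
    Represents (pieces t) fun y : ι → G => t.realize y := by
  induction t with
  | var i => exact represents_single i
  | @func l f ts ih =>
    match l, f with
    | 0, _ => exact represents_zero
    | 1, _ => exact (ih 0).neg
    | 2, .add => exact (ih 0).add (ih 1)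
    | 2, .join => exact (ih 0).sup (ih 1)
    | 2, .meet => exact (ih 0).inf (ih 1)
    | _ + 3, f => exact f.elim

end Piecewise

section Regions

variable {ι G : Type*}

def eqRegions (Ps Qs : List (Piece ι)) : List (List (LinIneq ι)) :=
  Ps.flatMap fun P => Qs.map fun Q => P.1 ++ Q.1 ++ [⟨P.2 - Q.2, false⟩] ++ [⟨Q.2 - P.2, false⟩]

def andRegions (Rs Rs' : List (List (LinIneq ι))) : List (List (LinIneq ι)) :=
  Rs.flatMap fun R => Rs'.map (R ++ ·)

def equationRegions [DecidableEq ι] (E : List (LGrpLang.Term ι × LGrpLang.Term ι)) :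
    List (List (LinIneq ι)) :=
  E.foldr (fun e Rs => andRegions (eqRegions (pieces e.1) (pieces e.2)) Rs)
    [([] : List (LinIneq ι))]

variable [Fintype ι]

def Describes [AddCommGroup G] [Preorder G] (Rs : List (List (LinIneq ι)))
    (p : (ι → G) → Prop) : Prop :=
  ∀ y, p y ↔ ∃ R ∈ Rs, AllHold R y

lemma Describes.and [AddCommGroup G] [Preorder G] {Rs Rs' : List (List (LinIneq ι))}
    {p q : (ι → G) → Prop} (h : Describes Rs p) (h' : Describes Rs' q) :
    Describes (andRegions Rs Rs') fun y => p y ∧ q y := by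
  intro y
  simp only [andRegions, List.mem_flatMap, List.mem_map, h y, h' y]
  constructor
  · rintro ⟨⟨R, hR, hRy⟩, ⟨R', hR', hR'y⟩⟩
    exact ⟨_, ⟨R, hR, R', hR', rfl⟩, allHold_append.2 ⟨hRy, hR'y⟩⟩
  · rintro ⟨_, ⟨R, hR, R', hR', rfl⟩, hy⟩
    exact ⟨⟨R, hR, (allHold_append.1 hy).1⟩, ⟨R', hR', (allHold_append.1 hy).2⟩⟩

variable [AddCommGroup G] [LinearOrder G] [IsOrderedAddMonoid G]

lemma Represents.describes_eq {Ps Qs : List (Piece ι)} {f g : (ι → G) → G}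
    (hP : Represents Ps f) (hQ : Represents Qs g) :
    Describes (eqRegions Ps Qs) fun y => f y = g y := by
  intro y
  simp only [eqRegions, List.mem_flatMap, List.mem_map]
  constructor
  · intro hfg
    obtain ⟨P, hPs, hPy⟩ := hP.2 y
    obtain ⟨Q, hQs, hQy⟩ := hQ.2 y
    refine ⟨_, ⟨P, hPs, Q, hQs, rfl⟩, ?_⟩
    simp only [allHold_append, allHold_singleton, holds_nonneg_iff, evalForm_sub, sub_nonneg,
      ← hP.1 P hPs y hPy, ← hQ.1 Q hQs y hQy, hfg, le_refl, and_true]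
    exact ⟨hPy, hQy⟩
  · rintro ⟨_, ⟨P, hPs, Q, hQs, rfl⟩, hy⟩
    simp only [allHold_append, allHold_singleton, holds_nonneg_iff, evalForm_sub,
      sub_nonneg] at hy
    rw [hP.1 P hPs y hy.1.1.1, hQ.1 Q hQs y hy.1.1.2]
    exact le_antisymm hy.2 hy.1.2

theorem describes_equationRegions [DecidableEq ι]
    (E : List (LGrpLang.Term ι × LGrpLang.Term ι)) :
    Describes (equationRegions E) fun y : ι → G => ∀ e ∈ E, e.1.realize y = e.2.realize y := by
  induction E with
  | nil => simp [Describes, equationRegions, AllHold]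
  | cons e E ih =>
    simpa only [equationRegions, List.foldr_cons, List.forall_mem_cons] using
      ((represents_pieces e.1).describes_eq (represents_pieces e.2)).and ih

theorem exists_int_of_equations [DecidableEq ι] {E : List (LGrpLang.Term ι × LGrpLang.Term ι)}
    {T : List (LinIneq ι)} {y : ι → G} (hE : ∀ e ∈ E, e.1.realize y = e.2.realize y)
    (hT : AllHold T y) :
    ∃ w : ι → ℤ, (∀ e ∈ E, e.1.realize w = e.2.realize w) ∧ AllHold T w := by
  obtain ⟨R, hR, hRy⟩ := (describes_equationRegions E y).1 hE
  obtain ⟨w, hw⟩ := exists_int_of_allHold (allHold_append.2 ⟨hRy, hT⟩)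
  exact ⟨w, (describes_equationRegions E w).2 ⟨R, hR, (allHold_append.1 hw).1⟩,
    (allHold_append.1 hw).2⟩

end Regions

section LatticeOrderedGroup

variable {G H : Type*} [Lattice G] [AddCommGroup G] [IsOrderedAddMonoid G]
  [Lattice H] [AddCommGroup H] [IsOrderedAddMonoid H]

lemma map_inf_of_map_sup (f : G →+ H) (hf : ∀ a b, f (a ⊔ b) = f a ⊔ f b) (a b : G) :
    f (a ⊓ b) = f a ⊓ f b := by
  rw [← neg_neg (a ⊓ b), neg_inf, map_neg, hf, map_neg, map_neg, neg_sup, neg_neg, neg_neg]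

def lgrpHom (f : G →+ H) (hf : ∀ a b, f (a ⊔ b) = f a ⊔ f b) : G →[LGrpLang] H where
  toFun := f
  map_fun' {n} F x := by
    match n, F with
    | 0, _ => exact map_zero f
    | 1, _ => exact map_neg f (x 0)
    | 2, .add => exact map_add f (x 0) (x 1)
    | 2, .join => exact hf (x 0) (x 1)
    | 2, .meet => exact map_inf_of_map_sup f hf (x 0) (x 1)
    | _ + 3, F => exact F.elim
  map_rel' {_} r := r.elim

lemma lgrpHom_apply (f : G →+ H) (hf : ∀ a b, f (a ⊔ b) = f a ⊔ f b) (g : G) :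
    lgrpHom f hf g = f g :=
  rfl

lemma eq_zero_of_abs_nonpos {y : G} (h : |y| ≤ 0) : y = 0 :=
  le_antisymm ((le_abs_self y).trans h) (neg_nonpos.1 ((neg_le_abs y).trans h))

def zmultiplesLHom (a : G) (ha : 0 ≤ a) : ℤ →[LGrpLang] G :=
  lgrpHom (zmultiplesHom G a) fun k l => (zsmul_left_mono ha).map_sup k l

lemma zmultiplesLHom_apply (a : G) (ha : 0 ≤ a) (k : ℤ) : zmultiplesLHom a ha k = k • a :=
  rfl

lemma zmultiplesLHom_injective {a : G} (ha : 0 < a) :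
    Function.Injective (zmultiplesLHom a ha.le) :=
  (zsmul_left_strictMono ha).injective

lemma add_inf_eq_zero {x y z : G} (hxz : x ⊓ z = 0) (hyz : y ⊓ z = 0) : (x + y) ⊓ z = 0 := by
  have hx : 0 ≤ x := hxz ▸ inf_le_left
  have hy : 0 ≤ y := hyz ▸ inf_le_left
  have hz : 0 ≤ z := hxz ▸ inf_le_right
  refine le_antisymm ?_ (le_inf (add_nonneg hx hy) hz)
  calc (x + y) ⊓ z ≤ ((x + y) ⊓ (z + y)) ⊓ z :=
        le_inf (inf_le_inf_left _ (le_add_of_nonneg_right hy)) inf_le_right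
    _ = y ⊓ z := by rw [← inf_add, hxz, zero_add]
    _ = 0 := hyz

lemma nsmul_inf_nsmul_eq_zero {x y : G} (hxy : x ⊓ y = 0) (n : ℕ) : n • x ⊓ n • y = 0 := by
  have key : ∀ {x y : G}, x ⊓ y = 0 → ∀ n : ℕ, n • x ⊓ y = 0 := fun hxy n => by
    induction n with
    | zero => simpa using (hxy ▸ inf_le_right : (0 : G) ≤ _)
    | succ n ih => rw [succ_nsmul]; exact add_inf_eq_zero ih hxy
  rw [inf_comm]
  exact key (by rw [inf_comm]; exact key hxy n) n

end LatticeOrderedGroup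

section PrimeSubgroup

open LatticeOrderedAddCommGroup

variable {A : Type*} [Lattice A] [AddCommGroup A] [IsOrderedAddMonoid A]

/-- For `P` solid and `0 ≤ u`, the solid subgroup generated by `P` and `u`. -/
def AddSubgroup.solidAdjoin (P : AddSubgroup A) (u : A) : AddSubgroup A where
  carrier := {g | ∃ p ∈ P, ∃ k : ℕ, |g| ≤ p + k • u}
  zero_mem' := ⟨0, P.zero_mem, 0, by simp⟩
  add_mem' := by
    rintro g h ⟨p, hp, k, hk⟩ ⟨q, hq, l, hl⟩
    refine ⟨p + q, P.add_mem hp hq, k + l, (abs_add_le g h).trans ?_⟩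
    rw [add_nsmul, add_add_add_comm]
    exact add_le_add hk hl
  neg_mem' := by
    rintro g ⟨p, hp, k, hk⟩
    exact ⟨p, hp, k, by rwa [abs_neg]⟩

lemma AddSubgroup.isSolid_solidAdjoin (P : AddSubgroup A) (u : A) :
    IsSolid (P.solidAdjoin u : Set A) :=
  fun _ ⟨p, hp, k, hk⟩ _ hle => ⟨p, hp, k, hle.trans hk⟩

theorem exists_maximal_isSolid_not_mem {a : A} (ha : a ≠ 0) :
    ∃ P : AddSubgroup A, Maximal (fun Q : AddSubgroup A => IsSolid (Q : Set A) ∧ a ∉ Q) P := by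
  have hbot : IsSolid ((⊥ : AddSubgroup A) : Set A) ∧ a ∉ (⊥ : AddSubgroup A) :=
    ⟨fun x hx y hy => by
      rw [SetLike.mem_coe, AddSubgroup.mem_bot] at hx ⊢
      rw [hx, abs_zero] at hy
      exact eq_zero_of_abs_nonpos hy, by simpa using ha⟩
  obtain ⟨P, -, hP⟩ := zorn_le_nonempty₀ {Q : AddSubgroup A | IsSolid (Q : Set A) ∧ a ∉ Q}
    (fun c hcS hc Q hQ => by
      have hmem : ∀ {x}, x ∈ sSup c ↔ ∃ Q ∈ c, x ∈ Q :=
        AddSubgroup.mem_sSup_of_directedOn ⟨Q, hQ⟩ hc.directedOn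
      refine ⟨sSup c, ⟨fun x hx y hy => ?_, fun haS => ?_⟩, fun Q hQ => le_sSup hQ⟩
      · obtain ⟨Q, hQ, hxQ⟩ := hmem.1 hx
        exact hmem.2 ⟨Q, hQ, (hcS hQ).1 hxQ hy⟩
      · obtain ⟨Q, hQ, haQ⟩ := hmem.1 haS
        exact (hcS hQ).2 haQ) ⊥ hbot
  exact ⟨P, hP⟩

theorem mem_or_mem_of_inf_eq_zero {a : A} {P : AddSubgroup A}
    (hP : Maximal (fun Q : AddSubgroup A => IsSolid (Q : Set A) ∧ a ∉ Q) P) {x y : A}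
    (hxy : x ⊓ y = 0) : x ∈ P ∨ y ∈ P := by
  obtain ⟨⟨hPsolid, haP⟩, hPmax⟩ := hP
  by_contra! hxyP
  -- by maximality of `P`, adjoining any `u ∉ P` brings `a` into the solid subgroup
  have hbound : ∀ u, 0 ≤ u → u ∉ P → ∃ p ∈ P, ∃ k : ℕ, |a| ≤ p + k • u := by
    intro u hu huP
    by_contra hau
    refine huP (hPmax ⟨P.isSolid_solidAdjoin u, hau⟩ (fun g hg => ?_) ⟨0, P.zero_mem, 1, ?_⟩)
    · exact ⟨|g|, hPsolid hg (abs_abs g).le, 0, by simp⟩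
    · simp [abs_of_nonneg hu]
  obtain ⟨p, hp, k, hk⟩ := hbound x (hxy ▸ inf_le_left) hxyP.1
  obtain ⟨q, hq, l, hl⟩ := hbound y (hxy ▸ inf_le_right) hxyP.2
  have hle : ∀ (r s : A) (m n : ℕ) (z : A), r ≤ |r| → 0 ≤ s → 0 ≤ z →
      r + m • z ≤ |r| + s + (m + n) • z := fun r s m n z hr hs hz => by
    rw [add_nsmul]
    exact add_le_add (le_add_of_le_of_nonneg hr hs) (le_add_of_nonneg_right (nsmul_nonneg hz n))
  have habs : |a| ≤ |p| + |q| := by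
    calc |a| ≤ (|p| + |q| + (k + l) • x) ⊓ (|p| + |q| + (k + l) • y) := by
          refine le_inf (hk.trans (hle p |q| k l x (le_abs_self p) (abs_nonneg q)
            (hxy ▸ inf_le_left))) (hl.trans ?_)
          rw [add_comm |p|, add_comm k]
          exact hle q |p| l k y (le_abs_self q) (abs_nonneg p) (hxy ▸ inf_le_right)
      _ = |p| + |q| := by rw [← add_inf, nsmul_inf_nsmul_eq_zero hxy, add_zero]
  exact haP (hPsolid (P.add_mem (hPsolid hp (abs_abs p).le) (hPsolid hq (abs_abs q).le))
    (habs.trans (abs_of_nonneg (add_nonneg (abs_nonneg p) (abs_nonneg q))).symm.le))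

/-- The image of the positive cone in `A ⧸ P`. -/
def AddSubgroup.quotientCone (P : AddSubgroup A) (hP : IsSolid (P : Set A)) :
    AddGroupCone (A ⧸ P) :=
  { (AddSubmonoid.nonneg A).map (QuotientAddGroup.mk' P) with
    eq_zero_of_mem_of_neg_mem' := by
      rintro _ ⟨g, hg, rfl⟩ ⟨h, hh, hgh⟩
      have hgh : g + h ∈ P := by
        rw [← QuotientAddGroup.eq_zero_iff, QuotientAddGroup.mk_add]
        simp only [QuotientAddGroup.mk'_apply] at hgh
        rw [hgh, add_neg_cancel]
      refine (QuotientAddGroup.eq_zero_iff g).2 (hP hgh ?_)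
      rw [abs_of_nonneg hg, abs_of_nonneg (add_nonneg hg hh)]
      exact le_add_of_nonneg_right hh }

lemma AddSubgroup.mk_mem_quotientCone {P : AddSubgroup A} (hP : IsSolid (P : Set A)) {g : A}
    (hg : 0 ≤ g) : (g : A ⧸ P) ∈ P.quotientCone hP :=
  ⟨g, hg, rfl⟩

lemma AddSubgroup.hasMemOrNegMem_quotientCone {P : AddSubgroup A} (hP : IsSolid (P : Set A))
    (hprime : ∀ x y : A, x ⊓ y = 0 → x ∈ P ∨ y ∈ P) : HasMemOrNegMem (P.quotientCone hP) := by
  refine ⟨fun x => ?_⟩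
  induction x using QuotientAddGroup.induction_on with
  | H g =>
    have hg : (g : A ⧸ P) = ((g⁺ : A) : A ⧸ P) - ((g⁻ : A) : A ⧸ P) := by
      rw [← QuotientAddGroup.mk_sub, posPart_sub_negPart]
    rcases hprime _ _ (posPart_inf_negPart_eq_zero g) with hpos | hneg
    · right
      rw [hg, (QuotientAddGroup.eq_zero_iff _).2 hpos, zero_sub, neg_neg]
      exact mk_mem_quotientCone hP (negPart_nonneg g)
    · left
      rw [hg, (QuotientAddGroup.eq_zero_iff _).2 hneg, sub_zero]
      exact mk_mem_quotientCone hP (posPart_nonneg g)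

/-- `B` is the quotient by a prime solid subgroup avoiding `a`, ordered by the image of the
positive cone. -/
theorem exists_supHom_linearOrder {A : Type u} [Lattice A] [AddCommGroup A]
    [IsOrderedAddMonoid A] {a : A} (ha : a ≠ 0) :
    ∃ (B : Type u) (_ : AddCommGroup B) (_ : LinearOrder B) (_ : IsOrderedAddMonoid B)
      (q : A →+ B), (∀ g h, q (g ⊔ h) = q g ⊔ q h) ∧ q a ≠ 0 := by
  classical
  obtain ⟨P, hP⟩ := exists_maximal_isSolid_not_mem ha
  have hprime : ∀ x y : A, x ⊓ y = 0 → x ∈ P ∨ y ∈ P := fun _ _ => mem_or_mem_of_inf_eq_zero hP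
  have := P.hasMemOrNegMem_quotientCone hP.1.1 hprime
  let _ : LinearOrder (A ⧸ P) := .mkOfAddGroupCone (P.quotientCone hP.1.1)
  let q := QuotientAddGroup.mk' P
  have hq0 : ∀ x ∈ P, q x = 0 := fun x hx => (QuotientAddGroup.eq_zero_iff x).2 hx
  have hmono : Monotone q := fun g h hgh => by
    change q h - q g ∈ P.quotientCone hP.1.1
    rw [← map_sub]
    exact AddSubgroup.mk_mem_quotientCone hP.1.1 (sub_nonneg.2 hgh)
  -- `q (g ⊔ h)` is `q g` or `q h` since `(g ⊔ h - g) ⊓ (g ⊔ h - h) = 0`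
  have hsup : ∀ g h, q (g ⊔ h) = q g ⊔ q h := by
    intro g h
    rcases hprime _ _ (by rw [← sub_sup, sub_self] : (g ⊔ h - g) ⊓ (g ⊔ h - h) = 0)
      with hg | hh
    · have hq : q (g ⊔ h) = q g := by rw [← sub_eq_zero, ← map_sub, hq0 _ hg]
      rw [hq, eq_comm, sup_eq_left, ← hq]
      exact hmono le_sup_right
    · have hq : q (g ⊔ h) = q h := by rw [← sub_eq_zero, ← map_sub, hq0 _ hh]
      rw [hq, eq_comm, sup_eq_right, ← hq]
      exact hmono le_sup_left
  exact ⟨A ⧸ P, _, _, .mkOfCone (P.quotientCone hP.1.1), q, hsup,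
    fun h => hP.1.2 ((QuotientAddGroup.eq_zero_iff a).1 h)⟩

end PrimeSubgroup

namespace EFDSystem

section

variable {L : Language} (φ : EFDSystem L)

def IsSolution {G : Type*} [L.Structure G] (v : Fin φ.n ⊕ Fin φ.m → G) : Prop :=
  ∀ i, (φ.lhs i).realize v = (φ.rhs i).realize v

variable {φ} in
lemma IsSolution.map {G H : Type*} [L.Structure G] [L.Structure H] (f : G →[L] H)
    {v : Fin φ.n ⊕ Fin φ.m → G} (h : φ.IsSolution v) : φ.IsSolution (f ∘ v) := fun i => by
  rw [HomClass.realize_term, HomClass.realize_term, h i]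

def equations {κ : Type*} (g : Fin φ.n ⊕ Fin φ.m → κ) : List (L.Term κ × L.Term κ) :=
  List.ofFn fun i => ((φ.lhs i).relabel g, (φ.rhs i).relabel g)

lemma forall_mem_equations_iff {κ G : Type*} [L.Structure G] (g : Fin φ.n ⊕ Fin φ.m → κ)
    (y : κ → G) :
    (∀ e ∈ φ.equations g, e.1.realize y = e.2.realize y) ↔ φ.IsSolution (y ∘ g) := by
  simp [equations, IsSolution, Term.realize_relabel]

end

variable (φ : EFDSystem LGrpLang) {A : Type*} [Lattice A] [AddCommGroup A] [IsOrderedAddMonoid A]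
  {D : Type*} [AddCommGroup D] [LinearOrder D] [IsOrderedAddMonoid D]

theorem isSolution_iff_exists_allHold (y : Fin φ.n ⊕ Fin φ.m → D) :
    φ.IsSolution y ↔ ∃ R ∈ equationRegions (φ.equations id), AllHold R y := by
  classical
  exact (φ.forall_mem_equations_iff id y).symm.trans (describes_equationRegions _ y)

theorem eq_of_isSolution (hA : φ.Satisfies A) {a : A} (ha : 0 < a) {x : Fin φ.n → D}
    {z z' : Fin φ.m → D} (hz : φ.IsSolution (Sum.elim x z))
    (hz' : φ.IsSolution (Sum.elim x z')) : z = z' := by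
  classical
  by_contra hne
  obtain ⟨j, hj⟩ := Function.ne_iff.1 hne
  wlog hlt : z j < z' j generalizing z z'
  · exact this hz' hz (Ne.symm hne) hj.symm (hj.symm.lt_of_le (not_lt.1 hlt))
  let zj : Fin φ.n ⊕ (Fin φ.m ⊕ Fin φ.m) := .inr (.inl j)
  let zj' : Fin φ.n ⊕ (Fin φ.m ⊕ Fin φ.m) := .inr (.inr j)
  obtain ⟨w, hwE, hwT⟩ := exists_int_of_equations
    (E := φ.equations (Sum.map id Sum.inl) ++ φ.equations (Sum.map id Sum.inr))
    (T := [⟨Pi.single zj' 1 - Pi.single zj 1, true⟩]) (y := Sum.elim x (Sum.elim z z'))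
    (by
      rw [List.forall_mem_append, forall_mem_equations_iff, forall_mem_equations_iff,
        Sum.elim_comp_map, Sum.elim_comp_map]
      exact ⟨hz, hz'⟩)
    (by simpa [allHold_singleton, Holds, zj, zj'] using hlt)
  rw [List.forall_mem_append, forall_mem_equations_iff, forall_mem_equations_iff] at hwE
  rw [allHold_singleton, Holds, evalForm_sub, evalForm_single, evalForm_single] at hwT
  let f := zmultiplesLHom a ha.le
  obtain ⟨zA, -, huniq⟩ := hA (f ∘ w ∘ Sum.inl)
  have hsol : ∀ g : Fin φ.m → Fin φ.m ⊕ Fin φ.m,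
      φ.IsSolution (w ∘ Sum.map id g) → f (w (.inr (g j))) = zA j := fun g hg => by
    have hfg : f ∘ (w ∘ Sum.map id g) = Sum.elim (f ∘ w ∘ Sum.inl) (f ∘ w ∘ Sum.inr ∘ g) := by
      funext v
      cases v <;> rfl
    exact congrFun (huniq _ (hfg ▸ hg.map f)) j
  exact (leOrLt_sub_iff.1 hwT).ne
    (zmultiplesLHom_injective ha ((hsol _ hwE.1).trans (hsol _ hwE.2).symm))

theorem exists_isSolution (hA : φ.Satisfies A) {a : A} (ha : 0 < a) [Nontrivial D]
    (hdiv : ∀ n : ℕ, 0 < n → ∀ g : D, ∃ h : D, n • h = g) (x : Fin φ.n → D) :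
    ∃ z, φ.IsSolution (Sum.elim x z) := by
  classical
  obtain ⟨B, _, _, _, q, hq, hqa⟩ := exists_supHom_linearOrder ha.ne'
  have hqa : 0 < q a := by
    refine lt_of_le_of_ne ?_ hqa.symm
    rw [← map_zero q, ← sup_eq_right.2 ha.le, hq]
    exact le_sup_left
  let Rs := equationRegions (φ.equations id)
  let zs : List (Fin φ.n ⊕ Fin φ.m) := Finset.univ.toList.map Sum.inr
  obtain ⟨w, hw⟩ := exists_int_holds_iff (Rs.flatMap (elimAll zs)) (Sum.elim x 0)
  obtain ⟨zA, hzA, -⟩ := hA (zmultiplesLHom a ha.le ∘ w ∘ Sum.inl)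
  obtain ⟨R, hR, hRB⟩ := (φ.isSolution_iff_exists_allHold _).1
    (IsSolution.map (lgrpHom q hq) (v := Sum.elim _ zA) hzA)
  have hRx : AllHold (elimAll zs R) (Sum.elim x 0) := fun c hc => by
    refine (hw c (List.mem_flatMap.2 ⟨R, hR, hc⟩)).1 ?_
    rw [← holds_comp_iff (zmultiplesHom B (q a)) (zsmul_left_strictMono hqa)]
    refine (holds_congr fun v hv => ?_).1 (allHold_elimAll hRB c hc)
    rcases v with i | j
    · simp [lgrpHom_apply, zmultiplesLHom_apply]
    · exact absurd (coeff_eq_zero_of_mem_elimAll (by simp [zs]) hc) hv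
  obtain ⟨y, hyx, hyR⟩ := exists_allHold_of_allHold_elimAll hdiv hRx
  have hy : Sum.elim x (y ∘ Sum.inr) = y := by
    funext v
    rcases v with i | j
    · exact (hyx (.inl i) (by simp [zs])).symm
    · rfl
  exact ⟨y ∘ Sum.inr, hy ▸ (φ.isSolution_iff_exists_allHold y).2 ⟨R, hR, hyR⟩⟩

end EFDSystem

/-- If an EFD-sentence has a nontrivial abelian ℓ-group model, then every divisible
linearly ordered abelian group satisfies it. -/
theorem divisible_satisfies_efd (φ : EFDSystem LGrpLang)
    (A : Type) [Lattice A] [AddCommGroup A] [CovariantClass A A (· + ·) (· ≤ ·)]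
    [Nontrivial A] (hA : φ.Satisfies A)
    (D : Type) [AddCommGroup D] [LinearOrder D] [IsOrderedAddMonoid D]
    (hdiv : ∀ n : ℕ, 0 < n → ∀ g : D, ∃ h : D, n • h = g) :
    φ.Satisfies D := by
  have : IsOrderedAddMonoid A := { add_le_add_left := fun _ _ h c => add_le_add_left h c }
  obtain ⟨b, hb⟩ := exists_ne (0 : A)
  have ha : 0 < |b| := (abs_nonneg b).lt_of_ne fun h => hb (eq_zero_of_abs_nonpos h.ge)
  intro x
  obtain ⟨z, hz⟩ : ∃ z, φ.IsSolution (Sum.elim x z) := by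
    rcases subsingleton_or_nontrivial D with hD | hD
    · exact ⟨0, fun i => Subsingleton.elim _ _⟩
    · exact φ.exists_isSolution hA ha hdiv x
  exact ⟨z, hz, fun z' hz' => φ.eq_of_isSolution hA ha hz' hz⟩
end

section
/- For every 𝓛_D-term s with variables indexed by Fin n there exist a positive integer k and an 𝓛-term t with variables indexed by Fin n such that for every divisible linearly ordered abelian group D and every a : Fin n → D, one has k • Term.realize a s = Term.realize a t. -/
open FirstOrder Language

open scoped Classical

/-- Function symbols of the language `𝓛_D`: those of `LGrpLang` together with a unary
division symbol `d_k` for each positive integer `k`. -/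
def LDivFunc : ℕ → Type
  | 0 => Unit
  | 1 => Unit ⊕ ℕ+
  | 2 => LGrpBin
  | _ => Empty

/-- The expansion `𝓛_D` of the language of ℓ-groups by a unary division symbol `d_k`
for each positive integer `k`. -/
def LDivLang : FirstOrder.Language :=
  ⟨LDivFunc, fun _ => Empty⟩

/-- The `𝓛_D`-structure on a linearly ordered abelian group, where `d_k` sends `x` to
the unique `z` with `k • z = x` when such a `z` exists (as it does when the group is
divisible; it is then unique since linearly ordered abelian groups are torsion-free),
and to `0` otherwise. -/
noncomputable instance ldivStructure (D : Type*) [AddCommGroup D] [LinearOrder D]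
    [IsOrderedAddMonoid D] :
    LDivLang.Structure D where
  funMap {n} f x :=
    match n, f, x with
    | 0, _, _ => 0
    | 1, Sum.inl _, x => -(x 0)
    | 1, Sum.inr k, x => if h : ∃ z : D, (k : ℕ) • z = x 0 then h.choose else 0
    | 2, LGrpBin.add, x => x 0 + x 1
    | 2, LGrpBin.join, x => x 0 ⊔ x 1
    | 2, LGrpBin.meet, x => x 0 ⊓ x 1
    | (_+3), f, _ => f.elim
  RelMap {_} r := r.elim

/-! On a linearly ordered abelian group, `x ↦ k • x` preserves `0`, `-`, `+`, `⊔` and `⊓`, while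
`m • d_m(x) = x` once `x` is divisible by `m`. So, by induction on `s`, one brings the subterms of
a symbol to a common scale `K` (the product of their scales) and either pushes `K • ·` through an
ℓ-group symbol or absorbs a division `d_m` by passing to the scale `m * K`. -/

namespace LGrpLang

variable {α : Type*}

def nsmulTerm : ℕ → LGrpLang.Term α → LGrpLang.Term α
  | 0, _ => Term.func (L := LGrpLang) (l := 0) (Unit.unit : LGrpFunc 0) ![]
  | k + 1, t => Term.func (L := LGrpLang) (l := 2) (LGrpBin.add : LGrpFunc 2) ![t, nsmulTerm k t]

@[simp]
lemma realize_nsmulTerm {G : Type*} [Lattice G] [AddCommGroup G] (a : α → G) (k : ℕ)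
    (t : LGrpLang.Term α) : (nsmulTerm k t).realize a = k • t.realize a := by
  induction k with
  | zero => exact (zero_nsmul _).symm
  | succ k ih =>
    change t.realize a + (nsmulTerm k t).realize a = _
    rw [ih, succ_nsmul']

end LGrpLang

section Interpretation

variable {α D : Type*} [AddCommGroup D] [LinearOrder D] [IsOrderedAddMonoid D]

lemma nsmul_realize_lgrpBin (k : ℕ) (b : LGrpBin) (ts : Fin 2 → LDivLang.Term α)
    (us : Fin 2 → LGrpLang.Term α) (a : α → D) (h : ∀ i, k • (ts i).realize a = (us i).realize a) :
    k • (Term.func (L := LDivLang) (l := 2) b ts).realize a =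
      (Term.func (L := LGrpLang) (l := 2) b us).realize a := by
  have hmono : Monotone (fun x : D => k • x) := fun _ _ hxy => nsmul_le_nsmul_right hxy k
  cases b
  · exact (smul_add k _ _).trans (congrArg₂ (· + ·) (h 0) (h 1))
  · exact hmono.map_max.trans (congrArg₂ (· ⊔ ·) (h 0) (h 1))
  · exact hmono.map_min.trans (congrArg₂ (· ⊓ ·) (h 0) (h 1))

lemma nsmul_realize_div (m : ℕ+) (ts : Fin 1 → LDivLang.Term α) (a : α → D)
    (h : ∃ z : D, (m : ℕ) • z = (ts 0).realize a) :
    (m : ℕ) • (Term.func (L := LDivLang) (l := 1) (Sum.inr m) ts).realize a = (ts 0).realize a := by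
  change (m : ℕ) • (if h : ∃ z : D, (m : ℕ) • z = (ts 0).realize a then h.choose else 0) = _
  rw [dif_pos h, h.choose_spec]

end Interpretation

def ScalesTo {α : Type*} (k : ℕ) (s : LDivLang.Term α) (t : LGrpLang.Term α) : Prop :=
  ∀ (D : Type) [AddCommGroup D] [LinearOrder D] [IsOrderedAddMonoid D],
    (∀ n' : ℕ, 0 < n' → ∀ g : D, ∃ h : D, n' • h = g) →
    ∀ a : α → D, k • s.realize a = t.realize a

namespace ScalesTo

variable {α : Type*}

lemma var (i : α) : ScalesTo 1 (Term.var i) (Term.var i) :=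
  fun _ _ _ _ _ _ => one_nsmul _

lemma nsmul {k : ℕ} {s : LDivLang.Term α} {t : LGrpLang.Term α} (h : ScalesTo k s t) (m : ℕ) :
    ScalesTo (m * k) s (LGrpLang.nsmulTerm m t) := fun D _ _ _ hdiv a => by
  rw [LGrpLang.realize_nsmulTerm, mul_nsmul', h D hdiv a]

lemma exists_common {l : ℕ} {ts : Fin l → LDivLang.Term α}
    (h : ∀ i, ∃ (k : ℕ) (t : LGrpLang.Term α), 0 < k ∧ ScalesTo k (ts i) t) :
    ∃ K, 0 < K ∧ ∃ us : Fin l → LGrpLang.Term α, ∀ i, ScalesTo K (ts i) (us i) := by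
  choose k t hk ht using h
  refine ⟨∏ i, k i, Finset.prod_pos fun i _ => hk i,
    fun i => LGrpLang.nsmulTerm ((∏ j, k j) / k i) (t i), fun i => ?_⟩
  have hdvd : k i ∣ ∏ j, k j := Finset.dvd_prod_of_mem k (Finset.mem_univ i)
  simpa only [Nat.div_mul_cancel hdvd] using (ht i).nsmul ((∏ j, k j) / k i)

lemma exists_func {l : ℕ} (f : LDivFunc l) {ts : Fin l → LDivLang.Term α} {K : ℕ} (hK : 0 < K)
    {us : Fin l → LGrpLang.Term α} (h : ∀ i, ScalesTo K (ts i) (us i)) :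
    ∃ (k : ℕ) (t : LGrpLang.Term α), 0 < k ∧ ScalesTo k (Term.func f ts) t := by
  match l, f with
  | 0, _ =>
    exact ⟨K, Term.func (L := LGrpLang) (l := 0) (Unit.unit : LGrpFunc 0) ![], hK,
      fun D _ _ _ _ _ => nsmul_zero K⟩
  | 1, Sum.inl _ =>
    refine ⟨K, Term.func (L := LGrpLang) (l := 1) (Unit.unit : LGrpFunc 1) us, hK,
      fun D _ _ _ hdiv a => ?_⟩
    change K • -(ts 0).realize a = -(us 0).realize a
    rw [smul_neg, h 0 D hdiv a]
  | 1, Sum.inr m =>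
    refine ⟨m * K, us 0, Nat.mul_pos m.pos hK, fun D _ _ _ hdiv a => ?_⟩
    rw [mul_nsmul]
    exact (congrArg (K • ·) (nsmul_realize_div m ts a (hdiv m m.pos _))).trans (h 0 D hdiv a)
  | 2, b =>
    exact ⟨K, Term.func (L := LGrpLang) (l := 2) b us, hK,
      fun D _ _ _ hdiv a => nsmul_realize_lgrpBin K b ts us a fun i => h i D hdiv a⟩
  | _ + 3, f => exact f.elim

end ScalesTo

/-- For every `𝓛_D`-term `s` in variables `Fin n` there are a positive integer `k` and an
`𝓛`-term `t` such that `k • s(ā) = t(ā)` holds in every divisible linearly ordered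
abelian group. -/
theorem div_term_mul_eq_lgrp_term {n : ℕ} (s : LDivLang.Term (Fin n)) :
    ∃ (k : ℕ) (t : LGrpLang.Term (Fin n)), 0 < k ∧
      ∀ (D : Type) [AddCommGroup D] [LinearOrder D] [IsOrderedAddMonoid D],
        (∀ n' : ℕ, 0 < n' → ∀ g : D, ∃ h : D, n' • h = g) →
        ∀ a : Fin n → D, k • Term.realize a s = Term.realize a t := by
  induction s with
  | var i => exact ⟨1, Term.var i, one_pos, ScalesTo.var i⟩
  | func f ts ih =>
    obtain ⟨K, hK, us, hus⟩ := ScalesTo.exists_common ih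
    exact ScalesTo.exists_func f hK hus
end

section
/- Let k be a positive integer and G an abelian ℓ-group. Then the following are equivalent: (a) for every x ∈ G there is exactly one z ∈ G with 0 ≤ z and k • z = x ⊔ (−x); (b) for every x ∈ G there is exactly one z ∈ G with k • z = x. (The translation δ_k* of the hoop sentence δ_k is equivalent to δ_k over abelian ℓ-groups.) -/
/-!
An abelian ℓ-group is torsion-free: for `c = a ⊓ 0` one has `(m + 1) • c = (m + 1) • a ⊓ m • c`,
so `0 ≤ (m + 1) • a` forces `(m + 1) • c = m • c`, i.e. `c = 0`. Hence `k`-th roots are unique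
whenever they exist, and existence of nonnegative roots of nonnegative elements gives roots of
all elements by writing `x = x⁺ - x⁻`. Conversely a root of `|x|` is nonnegative, since
`k • z = |x| ≥ 0` and torsion-freeness again forces `0 ≤ z`.
-/

namespace LatticeOrderedAddCommGroup

variable {G : Type*} [Lattice G] [AddCommGroup G] [AddLeftMono G]

lemma succ_nsmul_inf_zero (a : G) (m : ℕ) :
    (m + 1) • (a ⊓ 0) = (m + 1) • a ⊓ m • (a ⊓ 0) := by
  induction m with
  | zero => simp
  | succ m ih =>
    have hle : (m + 1) • (a ⊓ 0) ≤ a + m • (a ⊓ 0) := by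
      rw [succ_nsmul']
      exact add_le_add_left inf_le_left _
    calc (m + 1 + 1) • (a ⊓ 0) = (m + 1) • (a ⊓ 0) + (a ⊓ 0) := succ_nsmul _ _
      _ = (a + (m + 1) • (a ⊓ 0)) ⊓ (m + 1) • (a ⊓ 0) := by
        rw [add_inf, add_zero, add_comm]
      _ = (m + 1 + 1) • a ⊓ (a + m • (a ⊓ 0)) ⊓ (m + 1) • (a ⊓ 0) := by
        rw [ih, add_inf, ← succ_nsmul']
      _ = (m + 1 + 1) • a ⊓ (m + 1) • (a ⊓ 0) := by
        rw [inf_assoc, inf_eq_right.mpr hle]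

lemma nonneg_of_nsmul_nonneg {n : ℕ} (hn : n ≠ 0) {a : G} (h : 0 ≤ n • a) : 0 ≤ a := by
  obtain ⟨m, rfl⟩ := Nat.exists_eq_succ_of_ne_zero hn
  have hm : m • (a ⊓ 0) ≤ (m + 1) • a := (nsmul_nonpos inf_le_right m).trans h
  have hsucc : (m + 1) • (a ⊓ 0) = m • (a ⊓ 0) := by
    rw [succ_nsmul_inf_zero, inf_eq_right.mpr hm]
  rw [succ_nsmul, add_eq_left] at hsucc
  exact inf_eq_right.mp hsucc

instance : IsAddTorsionFree G where
  nsmul_right_injective n hn a b hab :=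
    le_antisymm (sub_nonneg.mp (nonneg_of_nsmul_nonneg hn (by simp [nsmul_sub, hab])))
      (sub_nonneg.mp (nonneg_of_nsmul_nonneg hn (by simp [nsmul_sub, hab])))

lemma exists_nsmul_eq_of_forall_nonneg {k : ℕ} (h : ∀ y : G, 0 ≤ y → ∃ z, k • z = y) (x : G) :
    ∃ z, k • z = x := by
  obtain ⟨a, ha⟩ := h x⁺ (posPart_nonneg x)
  obtain ⟨b, hb⟩ := h x⁻ (negPart_nonneg x)
  exact ⟨a - b, by rw [nsmul_sub, ha, hb, posPart_sub_negPart]⟩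

end LatticeOrderedAddCommGroup

open LatticeOrderedAddCommGroup in
/-- Over abelian ℓ-groups, the translation `δ_k*` of the hoop sentence `δ_k`
(`∀ x ∃! z ≥ 0, k z = x ⊔ (-x)`) is equivalent to `δ_k` (`∀ x ∃! z, k z = x`). -/
theorem delta_k_star_iff_delta_k (k : ℕ) (hk : 0 < k) (G : Type)
    [Lattice G] [AddCommGroup G] [CovariantClass G G (· + ·) (· ≤ ·)] :
    (∀ x : G, ∃! z : G, 0 ≤ z ∧ k • z = x ⊔ (-x)) ↔ (∀ x : G, ∃! z : G, k • z = x) := by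
  constructor
  · intro H x
    have hroots (y : G) (hy : 0 ≤ y) : ∃ z, k • z = y :=
      (H y).exists.imp fun _ hz => hz.2.trans (abs_of_nonneg hy)
    obtain ⟨z, hz⟩ := exists_nsmul_eq_of_forall_nonneg hroots x
    exact ⟨z, hz, fun w hw => nsmul_right_injective hk.ne' (hw.trans hz.symm)⟩
  · intro H x
    obtain ⟨z, hz, huniq⟩ := H |x|
    have hz0 : 0 ≤ z := nonneg_of_nsmul_nonneg hk.ne' (hz.symm ▸ abs_nonneg x)
    exact ⟨z, ⟨hz0, hz⟩, fun w hw => huniq w hw.2⟩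
end
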